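/- arXiv:1705.05646 — 7 statements merged into one kernel-verified Lean document; each statement's English description precedes it below -/
import Mathlib

section
/- If U is a vertex cover of the fixed graph G of size exactly 4(k−1) + 4·log k, then there exist indices i, j ∈ {0,…,k−1} such that none of the four nodes a₁^i, a₂^j, b₁^i, b₂^j belongs to U. -/
/-!
The uncovered vertices form an independent set. The vertices split into the four cliques, each
containing at most one uncovered vertex, and the `2 log k` bit 4-cycles
`f_A^h, t_A^h, f_B^h, t_B^h`, whose uncovered vertices lie in `{f_A^h, f_B^h}` or in
`{t_A^h, t_B^h}`. A cover of size `4(k - 1) + 4 log k` leaves exactly `4 + 4 log k` vertices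
uncovered, so all these bounds are attained: every clique has an uncovered vertex `s^i`, and every
cycle an uncovered pair. As `s^i` is adjacent to its bin-node of bit `h`, that node is covered, so
bit `h` of `i` is the one not named by the uncovered pair. Hence the uncovered `a_ℓ^i` and `b_ℓ^j`
on side `ℓ` agree in every bit below `log k`, and `i = j` because `k = 2 ^ log k`.
-/

namespace VCLowerBound

/-- The vertices of the fixed lower-bound graph for minimum vertex cover:
four cliques `A₁, A₂, B₁, B₂` of size `k` and, for each of them,
bit-gadget nodes `f_S^h` and `t_S^h` for `0 ≤ h ≤ log k − 1`. -/
inductive V (k : ℕ) : Type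
  | a1 : Fin k → V k
  | a2 : Fin k → V k
  | b1 : Fin k → V k
  | b2 : Fin k → V k
  | fA1 : Fin (Nat.log 2 k) → V k
  | tA1 : Fin (Nat.log 2 k) → V k
  | fA2 : Fin (Nat.log 2 k) → V k
  | tA2 : Fin (Nat.log 2 k) → V k
  | fB1 : Fin (Nat.log 2 k) → V k
  | tB1 : Fin (Nat.log 2 k) → V k
  | fB2 : Fin (Nat.log 2 k) → V k
  | tB2 : Fin (Nat.log 2 k) → V k

open V

/-- The fixed graph `G`: each of `A₁, A₂, B₁, B₂` is a clique; for each `h` and each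
side `ℓ ∈ {1,2}` the bit-nodes `(f^h_{A_ℓ}, t^h_{A_ℓ}, f^h_{B_ℓ}, t^h_{B_ℓ})`
form a 4-cycle; and each node `s^i` is connected to its `bin`-nodes:
`f_S^h` when bit `h` of `i` is `0`, and `t_S^h` when bit `h` of `i` is `1`. -/
def G (k : ℕ) : SimpleGraph (V k) :=
  SimpleGraph.fromEdgeSet
    ({e | ∃ i j : Fin k,
        e = s(a1 i, a1 j) ∨ e = s(a2 i, a2 j) ∨ e = s(b1 i, b1 j) ∨ e = s(b2 i, b2 j)} ∪
     {e | ∃ h : Fin (Nat.log 2 k),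
        e = s(fA1 h, tA1 h) ∨ e = s(tA1 h, fB1 h) ∨ e = s(fB1 h, tB1 h) ∨ e = s(tB1 h, fA1 h) ∨
        e = s(fA2 h, tA2 h) ∨ e = s(tA2 h, fB2 h) ∨ e = s(fB2 h, tB2 h) ∨ e = s(tB2 h, fA2 h)} ∪
     {e | ∃ (i : Fin k) (h : Fin (Nat.log 2 k)),
        (i.val.testBit h.val = false ∧
          (e = s(a1 i, fA1 h) ∨ e = s(a2 i, fA2 h) ∨ e = s(b1 i, fB1 h) ∨ e = s(b2 i, fB2 h))) ∨
        (i.val.testBit h.val = true ∧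
          (e = s(a1 i, tA1 h) ∨ e = s(a2 i, tA2 h) ∨ e = s(b1 i, tB1 h) ∨ e = s(b2 i, tB2 h)))})

/-- A vertex cover: a set of vertices containing at least one endpoint of every edge. -/
def IsVertexCover {α : Type*} (G : SimpleGraph α) (U : Set α) : Prop :=
  ∀ ⦃u v : α⦄, G.Adj u v → u ∈ U ∨ v ∈ U

open Finset

namespace IsVertexCover

variable {α : Type*} {G : SimpleGraph α} {U : Set α}

theorem not_adj_of_notMem (hU : IsVertexCover G U) {v w : α} (hv : v ∉ U) (hw : w ∉ U) :
    ¬G.Adj v w := fun hvw => (hU hvw).elim hv hw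

theorem mem_and_mem_or_mem_and_mem_of_cycle (hU : IsVertexCover G U) {v₀ v₁ v₂ v₃ : α}
    (h₀₁ : G.Adj v₀ v₁) (h₁₂ : G.Adj v₁ v₂) (h₂₃ : G.Adj v₂ v₃) (h₃₀ : G.Adj v₃ v₀) :
    (v₀ ∈ U ∧ v₂ ∈ U) ∨ (v₁ ∈ U ∧ v₃ ∈ U) := by
  have := hU h₀₁; have := hU h₁₂; have := hU h₂₃; have := hU h₃₀
  tauto

end IsVertexCover

theorem _root_.Finset.card_filter_eq_of_card_eq_sum {α β : Type*} [Fintype β] [DecidableEq β]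
    {s : Finset α} (f : α → β) {n : β → ℕ} (hle : ∀ b, #{a ∈ s | f a = b} ≤ n b)
    (hs : #s = ∑ b, n b) (b : β) : #{a ∈ s | f a = b} = n b := by
  rw [card_eq_sum_card_fiberwise (t := (univ : Finset β)) fun _ _ => mem_univ _] at hs
  exact (sum_eq_sum_iff_of_le fun b _ => hle b).mp hs b (mem_univ b)

variable {k : ℕ}

/-- `node ℓ X i` is `a_{ℓ+1}^i` (`X = 0`) or `b_{ℓ+1}^i` (`X = 1`). -/
def node : Fin 2 → Fin 2 → Fin k → V k
  | 0, 0 => a1 | 0, 1 => b1 | 1, 0 => a2 | 1, 1 => b2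

/-- `bitNode ℓ X β h` is `f^h` (`β = false`) or `t^h` (`β = true`) of the clique `node ℓ X`. -/
def bitNode : Fin 2 → Fin 2 → Bool → Fin (Nat.log 2 k) → V k
  | 0, 0, false => fA1 | 0, 0, true => tA1 | 0, 1, false => fB1 | 0, 1, true => tB1
  | 1, 0, false => fA2 | 1, 0, true => tA2 | 1, 1, false => fB2 | 1, 1, true => tB2

theorem adj_node_node (ℓ X : Fin 2) {i j : Fin k} (hij : i ≠ j) :
    (G k).Adj (node ℓ X i) (node ℓ X j) := by
  fin_cases ℓ <;> fin_cases X <;> simp [node, G, hij] <;> exact ⟨i, j, by simp⟩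

theorem adj_node_bitNode (ℓ X : Fin 2) (i : Fin k) (h : Fin (Nat.log 2 k)) :
    (G k).Adj (node ℓ X i) (bitNode ℓ X ((i : ℕ).testBit h) h) := by
  fin_cases ℓ <;> fin_cases X <;> cases hb : (i : ℕ).testBit h <;> simp [node, bitNode, G, hb]

/-- The 4-cycle `f_A^h, t_A^h, f_B^h, t_B^h` is the complete bipartite graph between its `f`-nodes
and its `t`-nodes. -/
theorem adj_bitNode_bitNode_not (ℓ X X' : Fin 2) (β : Bool) (h : Fin (Nat.log 2 k)) :
    (G k).Adj (bitNode ℓ X β h) (bitNode ℓ X' (!β) h) := by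
  fin_cases ℓ <;> fin_cases X <;> fin_cases X' <;> cases β <;> simp [bitNode, G]

abbrev Coord (k : ℕ) := Fin 2 × Fin 2 × Fin k ⊕ Fin 2 × Fin 2 × Bool × Fin (Nat.log 2 k)

def coordEquiv : V k ≃ Coord k where
  toFun
    | a1 i => .inl (0, 0, i) | b1 i => .inl (0, 1, i)
    | a2 i => .inl (1, 0, i) | b2 i => .inl (1, 1, i)
    | fA1 h => .inr (0, 0, false, h) | tA1 h => .inr (0, 0, true, h)
    | fB1 h => .inr (0, 1, false, h) | tB1 h => .inr (0, 1, true, h)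
    | fA2 h => .inr (1, 0, false, h) | tA2 h => .inr (1, 0, true, h)
    | fB2 h => .inr (1, 1, false, h) | tB2 h => .inr (1, 1, true, h)
  invFun
    | .inl (ℓ, X, i) => node ℓ X i
    | .inr (ℓ, X, β, h) => bitNode ℓ X β h
  left_inv v := by cases v <;> rfl
  right_inv x := by
    rcases x with ⟨ℓ, X, i⟩ | ⟨ℓ, X, β, h⟩ <;> fin_cases ℓ <;> fin_cases X <;> try cases β
    all_goals rfl

instance : Fintype (V k) := Fintype.ofEquiv _ coordEquiv.symm

instance : DecidableEq (V k) := coordEquiv.decidableEq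

theorem card_V : Fintype.card (V k) = 4 * k + 8 * Nat.log 2 k := by
  simp [Fintype.card_congr coordEquiv]
  ring

/-- The blocks partitioning `V k`: the four cliques `inl (ℓ, X)` and, for each side `ℓ` and
bit `h`, the 4-cycle `inr (ℓ, h)` of bit nodes. -/
abbrev Block (k : ℕ) := Fin 2 × Fin 2 ⊕ Fin 2 × Fin (Nat.log 2 k)

def block (v : V k) : Block k :=
  Sum.map (fun x => (x.1, x.2.1)) (fun x => (x.1, x.2.2.2)) (coordEquiv v)

theorem exists_eq_node_of_block_eq_inl {v : V k} {ℓ X : Fin 2} (hv : block v = .inl (ℓ, X)) :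
    ∃ i, v = node ℓ X i := by
  obtain ⟨x, rfl⟩ := coordEquiv.symm.surjective v
  rcases x with ⟨ℓ', X', i⟩ | x
  · simp only [block, Equiv.apply_symm_apply, Sum.map_inl, Sum.inl.injEq, Prod.mk.injEq] at hv
    obtain ⟨rfl, rfl⟩ := hv
    exact ⟨i, rfl⟩
  · simp [block] at hv

theorem exists_eq_bitNode_of_block_eq_inr {v : V k} {ℓ : Fin 2} {h : Fin (Nat.log 2 k)}
    (hv : block v = .inr (ℓ, h)) : ∃ X β, v = bitNode ℓ X β h := by
  obtain ⟨x, rfl⟩ := coordEquiv.symm.surjective v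
  rcases x with x | ⟨ℓ', X, β, h'⟩
  · simp [block] at hv
  · simp only [block, Equiv.apply_symm_apply, Sum.map_inr, Sum.inr.injEq, Prod.mk.injEq] at hv
    obtain ⟨rfl, rfl⟩ := hv
    exact ⟨X, β, rfl⟩

def capacity : Block k → ℕ := Sum.elim (fun _ => 1) (fun _ => 2)

theorem sum_capacity : ∑ b : Block k, capacity b = 4 + 4 * Nat.log 2 k := by
  simp [capacity]
  ring

section Uncovered

variable {U : Set (V k)} (hU : IsVertexCover (G k) U)
include hU

theorem testBit_ne_of_notMem {ℓ X : Fin 2} {i : Fin k} {β : Bool} {h : Fin (Nat.log 2 k)}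
    (hi : node ℓ X i ∉ U) (hβ : bitNode ℓ X β h ∉ U) : (i : ℕ).testBit h ≠ β := by
  rintro rfl
  exact hU.not_adj_of_notMem hi hβ (adj_node_bitNode ℓ X i h)

theorem eq_of_node_notMem (hk : k ≤ 2 ^ Nat.log 2 k) {ℓ : Fin 2}
    (hbits : ∀ h, ∃ β, bitNode ℓ 0 β h ∉ U ∧ bitNode ℓ 1 β h ∉ U) {i j : Fin k}
    (hi : node ℓ 0 i ∉ U) (hj : node ℓ 1 j ∉ U) : i = j := by
  refine Fin.ext (Nat.eq_of_testBit_eq fun n => ?_)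
  by_cases hn : n < Nat.log 2 k
  · obtain ⟨β, hβ₀, hβ₁⟩ := hbits ⟨n, hn⟩
    have hi' := testBit_ne_of_notMem hU hi hβ₀
    have hj' := testBit_ne_of_notMem hU hj hβ₁
    cases β <;> simp_all
  · have hkn : k ≤ 2 ^ n := hk.trans (Nat.pow_le_pow_right two_pos (not_lt.mp hn))
    rw [Nat.testBit_lt_two_pow (i.2.trans_le hkn), Nat.testBit_lt_two_pow (j.2.trans_le hkn)]

variable {s : Finset (V k)} (hs : ∀ v ∈ s, v ∉ U)
include hs

theorem card_filter_block_inl_le (c : Fin 2 × Fin 2) : #{v ∈ s | block v = .inl c} ≤ 1 := by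
  refine card_le_one.mpr fun v hv w hw => ?_
  simp only [mem_filter] at hv hw
  obtain ⟨i, rfl⟩ := exists_eq_node_of_block_eq_inl hv.2
  obtain ⟨j, rfl⟩ := exists_eq_node_of_block_eq_inl hw.2
  by_contra hne
  exact hU.not_adj_of_notMem (hs _ hv.1) (hs _ hw.1) (adj_node_node _ _ (mt (congrArg _) hne))

theorem exists_filter_block_inr_subset (ℓ : Fin 2) (h : Fin (Nat.log 2 k)) :
    ∃ β, {v ∈ s | block v = .inr (ℓ, h)} ⊆ {bitNode ℓ 0 β h, bitNode ℓ 1 β h} := by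
  have hcover : ∃ β, bitNode ℓ 0 β h ∈ U ∧ bitNode ℓ 1 β h ∈ U := by
    rcases hU.mem_and_mem_or_mem_and_mem_of_cycle (adj_bitNode_bitNode_not ℓ 0 0 false h)
      (adj_bitNode_bitNode_not ℓ 0 1 true h) (adj_bitNode_bitNode_not ℓ 1 1 false h)
      (adj_bitNode_bitNode_not ℓ 1 0 true h) with hf | ht
    exacts [⟨false, hf⟩, ⟨true, ht⟩]
  obtain ⟨β, hβ⟩ := hcover
  refine ⟨!β, fun v hv => ?_⟩
  simp only [mem_filter] at hv
  obtain ⟨X, γ, rfl⟩ := exists_eq_bitNode_of_block_eq_inr hv.2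
  have := hs _ hv.1
  fin_cases X <;> cases β <;> cases γ <;> simp_all

theorem card_filter_block_le (b : Block k) : #{v ∈ s | block v = b} ≤ capacity b := by
  rcases b with c | ⟨ℓ, h⟩
  · exact card_filter_block_inl_le hU hs c
  · obtain ⟨β, hβ⟩ := exists_filter_block_inr_subset hU hs ℓ h
    exact (card_le_card hβ).trans card_le_two

theorem exists_node_notMem_of_card_filter_block_eq (hk : k ≤ 2 ^ Nat.log 2 k)
    (hcap : ∀ b, #{v ∈ s | block v = b} = capacity b) (ℓ : Fin 2) :
    ∃ i, node ℓ 0 i ∉ U ∧ node ℓ 1 i ∉ U := by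
  have hclique : ∀ X, ∃ i, node ℓ X i ∉ U := by
    intro X
    obtain ⟨v, hv⟩ := card_pos.mp ((hcap (.inl (ℓ, X))).trans_gt one_pos)
    rw [mem_filter] at hv
    obtain ⟨i, rfl⟩ := exists_eq_node_of_block_eq_inl hv.2
    exact ⟨i, hs _ hv.1⟩
  have hbits : ∀ h, ∃ β, bitNode ℓ 0 β h ∉ U ∧ bitNode ℓ 1 β h ∉ U := by
    intro h
    obtain ⟨β, hβ⟩ := exists_filter_block_inr_subset hU hs ℓ h
    have heq := eq_of_subset_of_card_le hβ (by rw [hcap]; exact card_le_two)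
    have hpair : ∀ v ∈ ({bitNode ℓ 0 β h, bitNode ℓ 1 β h} : Finset (V k)), v ∉ U := by
      intro v hv
      rw [← heq, mem_filter] at hv
      exact hs v hv.1
    exact ⟨β, hpair _ (by simp), hpair _ (by simp)⟩
  obtain ⟨i, hi⟩ := hclique 0
  obtain ⟨j, hj⟩ := hclique 1
  exact ⟨i, hi, eq_of_node_notMem hU hk hbits hi hj ▸ hj⟩

end Uncovered

/-- If `U` is a vertex cover of the fixed graph `G` of size exactly `4(k−1) + 4·log k`,
then there are indices `i, j` such that none of `a₁^i, a₂^j, b₁^i, b₂^j` belongs to `U`. -/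
theorem exists_uncovered_of_vertexCover_card_eq (k : ℕ) (hk : 2 ≤ k)
    (hpow : ∃ m : ℕ, k = 2 ^ m) (U : Set (V k)) (hU : IsVertexCover (G k) U)
    (hcard : U.ncard = 4 * (k - 1) + 4 * Nat.log 2 k) :
    ∃ i j : Fin k, a1 i ∉ U ∧ a2 j ∉ U ∧ b1 i ∉ U ∧ b2 j ∉ U := by
  classical
  have hk_le : k ≤ 2 ^ Nat.log 2 k := by
    obtain ⟨m, rfl⟩ := hpow
    rw [Nat.log_pow one_lt_two]
  have hs : ∀ v ∈ Uᶜ.toFinset, v ∉ U := fun v => by simp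
  have hcard_compl : #Uᶜ.toFinset = ∑ b : Block k, capacity b := by
    rw [sum_capacity, ← Set.ncard_eq_toFinset_card', Set.ncard_compl, hcard,
      Nat.card_eq_fintype_card, card_V]
    omega
  have hcap := card_filter_eq_of_card_eq_sum block (card_filter_block_le hU hs) hcard_compl
  obtain ⟨i, hi⟩ := exists_node_notMem_of_card_filter_block_eq hU hs hk_le hcap 0
  obtain ⟨j, hj⟩ := exists_node_notMem_of_card_filter_block_eq hU hs hk_le hcap 1
  exact ⟨i, j, hi.1, hj.1, hi.2, hj.2⟩

end VCLowerBound
end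

section
/- The graph G_{x,y} has a vertex cover of cardinality 4(k−1) + 4·log k if and only if there exists a pair (i,j) ∈ {0,…,k−1}² with x_{i,j} = 1 and y_{i,j} = 1 (i.e., if and only if the Set Disjointness function on x and y evaluates to false). -/
namespace VCLowerBound

open V

/-- The graph `G_{x,y}`: the fixed graph `G` together with an edge `{a₁^i, a₂^j}`
whenever `x_{i,j} = 0` and an edge `{b₁^i, b₂^j}` whenever `y_{i,j} = 0`. -/
def Gxy (k : ℕ) (x y : Fin k → Fin k → Bool) : SimpleGraph (V k) :=
  SimpleGraph.fromEdgeSet ((G k).edgeSet ∪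
    {e | ∃ i j : Fin k,
      (x i j = false ∧ e = s(a1 i, a2 j)) ∨ (y i j = false ∧ e = s(b1 i, b2 j))})

deriving instance DecidableEq for V
deriving instance Fintype for V

variable {k : ℕ} {x y : Fin k → Fin k → Bool}

lemma Gxy_adj_iff {u v : V k} :
    (Gxy k x y).Adj u v ↔ u ≠ v ∧
      ((∃ i j : Fin k,
        s(u,v) = s(a1 i, a1 j) ∨ s(u,v) = s(a2 i, a2 j) ∨ s(u,v) = s(b1 i, b1 j) ∨ s(u,v) = s(b2 i, b2 j)) ∨
       (∃ h : Fin (Nat.log 2 k),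
        s(u,v) = s(fA1 h, tA1 h) ∨ s(u,v) = s(tA1 h, fB1 h) ∨ s(u,v) = s(fB1 h, tB1 h) ∨ s(u,v) = s(tB1 h, fA1 h) ∨
        s(u,v) = s(fA2 h, tA2 h) ∨ s(u,v) = s(tA2 h, fB2 h) ∨ s(u,v) = s(fB2 h, tB2 h) ∨ s(u,v) = s(tB2 h, fA2 h)) ∨
       (∃ (i : Fin k) (h : Fin (Nat.log 2 k)),
        (i.val.testBit h.val = false ∧
          (s(u,v) = s(a1 i, fA1 h) ∨ s(u,v) = s(a2 i, fA2 h) ∨ s(u,v) = s(b1 i, fB1 h) ∨ s(u,v) = s(b2 i, fB2 h))) ∨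
        (i.val.testBit h.val = true ∧
          (s(u,v) = s(a1 i, tA1 h) ∨ s(u,v) = s(a2 i, tA2 h) ∨ s(u,v) = s(b1 i, tB1 h) ∨ s(u,v) = s(b2 i, tB2 h)))) ∨
       (∃ i j : Fin k,
        (x i j = false ∧ s(u,v) = s(a1 i, a2 j)) ∨ (y i j = false ∧ s(u,v) = s(b1 i, b2 j)))) := by
  rw [Gxy, SimpleGraph.fromEdgeSet_adj, G, SimpleGraph.edgeSet_fromEdgeSet]
  simp only [Set.mem_union, Set.mem_diff, Set.mem_setOf_eq, Sym2.mk_isDiag_iff]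
  constructor
  · rintro ⟨(⟨(h | h) | h, -⟩ | h), hne⟩
    exacts [⟨hne, Or.inl h⟩, ⟨hne, Or.inr (Or.inl h)⟩, ⟨hne, Or.inr (Or.inr (Or.inl h))⟩,
      ⟨hne, Or.inr (Or.inr (Or.inr h))⟩]
  · rintro ⟨hne, (h | h | h | h)⟩
    exacts [⟨Or.inl ⟨Or.inl (Or.inl h), hne⟩, hne⟩, ⟨Or.inl ⟨Or.inl (Or.inr h), hne⟩, hne⟩,
      ⟨Or.inl ⟨Or.inr h, hne⟩, hne⟩, ⟨Or.inr h, hne⟩]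
open Finset in
/-- The explicit vertex cover associated to a pair `(i,j)`. -/
def cov (k : ℕ) (i j : Fin k) : Finset (V k) :=
  ((univ.erase i).image a1) ∪ ((univ.erase j).image a2) ∪
  ((univ.erase i).image b1) ∪ ((univ.erase j).image b2) ∪
  (univ.image fun h : Fin (Nat.log 2 k) => if (i : ℕ).testBit h.val then tA1 h else fA1 h) ∪
  (univ.image fun h : Fin (Nat.log 2 k) => if (j : ℕ).testBit h.val then tA2 h else fA2 h) ∪
  (univ.image fun h : Fin (Nat.log 2 k) => if (i : ℕ).testBit h.val then tB1 h else fB1 h) ∪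
  (univ.image fun h : Fin (Nat.log 2 k) => if (j : ℕ).testBit h.val then tB2 h else fB2 h)

section covmem
variable {k : ℕ} {i j : Fin k}

lemma mem_cov_a1 {i' : Fin k} : a1 i' ∈ cov k i j ↔ i' ≠ i := by
  simp [cov, ite_eq_iff]
lemma mem_cov_a2 {j' : Fin k} : a2 j' ∈ cov k i j ↔ j' ≠ j := by
  simp [cov, ite_eq_iff]
lemma mem_cov_b1 {i' : Fin k} : b1 i' ∈ cov k i j ↔ i' ≠ i := by
  simp [cov, ite_eq_iff]
lemma mem_cov_b2 {j' : Fin k} : b2 j' ∈ cov k i j ↔ j' ≠ j := by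
  simp [cov, ite_eq_iff]
lemma mem_cov_fA1 {h : Fin (Nat.log 2 k)} : fA1 h ∈ cov k i j ↔ (i : ℕ).testBit h.val = false := by
  simp [cov, ite_eq_iff]
lemma mem_cov_tA1 {h : Fin (Nat.log 2 k)} : tA1 h ∈ cov k i j ↔ (i : ℕ).testBit h.val = true := by
  simp [cov, ite_eq_iff]
lemma mem_cov_fA2 {h : Fin (Nat.log 2 k)} : fA2 h ∈ cov k i j ↔ (j : ℕ).testBit h.val = false := by
  simp [cov, ite_eq_iff]
lemma mem_cov_tA2 {h : Fin (Nat.log 2 k)} : tA2 h ∈ cov k i j ↔ (j : ℕ).testBit h.val = true := by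
  simp [cov, ite_eq_iff]
lemma mem_cov_fB1 {h : Fin (Nat.log 2 k)} : fB1 h ∈ cov k i j ↔ (i : ℕ).testBit h.val = false := by
  simp [cov, ite_eq_iff]
lemma mem_cov_tB1 {h : Fin (Nat.log 2 k)} : tB1 h ∈ cov k i j ↔ (i : ℕ).testBit h.val = true := by
  simp [cov, ite_eq_iff]
lemma mem_cov_fB2 {h : Fin (Nat.log 2 k)} : fB2 h ∈ cov k i j ↔ (j : ℕ).testBit h.val = false := by
  simp [cov, ite_eq_iff]
lemma mem_cov_tB2 {h : Fin (Nat.log 2 k)} : tB2 h ∈ cov k i j ↔ (j : ℕ).testBit h.val = true := by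
  simp [cov, ite_eq_iff]
end covmem
open Finset in
lemma cov_card {k : ℕ} (hk : 2 ≤ k) (i j : Fin k) :
    (cov k i j).card = 4 * (k - 1) + 4 * Nat.log 2 k := by
  have hek : (univ.erase i).card = k - 1 := by
    rw [Finset.card_erase_of_mem (mem_univ _), Finset.card_univ, Fintype.card_fin]
  have hej : (univ.erase j).card = k - 1 := by
    rw [Finset.card_erase_of_mem (mem_univ _), Finset.card_univ, Fintype.card_fin]
  have hite : ∀ (c : Fin (Nat.log 2 k) → Bool) (f t : Fin (Nat.log 2 k) → V k),
      (∀ a b, f a = f b → a = b) → (∀ a b, t a = t b → a = b) → (∀ a b, f a ≠ t b) →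
      (univ.image fun h => if c h then t h else f h).card = Nat.log 2 k := by
    intro c f t hf ht hft
    rw [Finset.card_image_of_injective _ ?_, Finset.card_univ, Fintype.card_fin]
    intro a b hab
    dsimp at hab
    split_ifs at hab
    · exact ht a b hab
    · exact absurd hab.symm (hft b a)
    · exact absurd hab (hft a b)
    · exact hf a b hab
  rw [cov,
    Finset.card_union_of_disjoint (by
      simp only [Finset.disjoint_union_left]
      and_intros <;>
      · refine Finset.disjoint_left.2 ?_
        rintro a h1 h2
        obtain ⟨i1, -, rfl⟩ := Finset.mem_image.1 h1
        obtain ⟨i2, -, h⟩ := Finset.mem_image.1 h2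
        first
        | (split_ifs at h <;> simp at h)
        | simp at h),
    Finset.card_union_of_disjoint (by
      simp only [Finset.disjoint_union_left]
      and_intros <;>
      · refine Finset.disjoint_left.2 ?_
        rintro a h1 h2
        obtain ⟨i1, -, rfl⟩ := Finset.mem_image.1 h1
        obtain ⟨i2, -, h⟩ := Finset.mem_image.1 h2
        first
        | (split_ifs at h <;> simp at h)
        | simp at h),
    Finset.card_union_of_disjoint (by
      simp only [Finset.disjoint_union_left]
      and_intros <;>
      · refine Finset.disjoint_left.2 ?_
        rintro a h1 h2
        obtain ⟨i1, -, rfl⟩ := Finset.mem_image.1 h1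
        obtain ⟨i2, -, h⟩ := Finset.mem_image.1 h2
        first
        | (split_ifs at h <;> simp at h)
        | simp at h),
    Finset.card_union_of_disjoint (by
      simp only [Finset.disjoint_union_left]
      and_intros <;>
      · refine Finset.disjoint_left.2 ?_
        rintro a h1 h2
        obtain ⟨i1, -, rfl⟩ := Finset.mem_image.1 h1
        obtain ⟨i2, -, h⟩ := Finset.mem_image.1 h2
        first
        | (split_ifs at h <;> simp at h)
        | simp at h),
    Finset.card_union_of_disjoint (by
      simp only [Finset.disjoint_union_left]
      and_intros <;>
      · refine Finset.disjoint_left.2 ?_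
        rintro a h1 h2
        obtain ⟨i1, -, rfl⟩ := Finset.mem_image.1 h1
        obtain ⟨i2, -, h⟩ := Finset.mem_image.1 h2
        first
        | (split_ifs at h <;> simp at h)
        | simp at h),
    Finset.card_union_of_disjoint (by
      simp only [Finset.disjoint_union_left]
      and_intros <;>
      · refine Finset.disjoint_left.2 ?_
        rintro a h1 h2
        obtain ⟨i1, -, rfl⟩ := Finset.mem_image.1 h1
        obtain ⟨i2, -, h⟩ := Finset.mem_image.1 h2
        first
        | (split_ifs at h <;> simp at h)
        | simp at h),
    Finset.card_union_of_disjoint (by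
      refine Finset.disjoint_left.2 ?_
      rintro a h1 h2
      obtain ⟨i1, -, rfl⟩ := Finset.mem_image.1 h1
      obtain ⟨i2, -, h⟩ := Finset.mem_image.1 h2
      first
      | (split_ifs at h <;> simp at h)
      | simp at h)]
  rw [Finset.card_image_of_injective _ (fun a b h => by simpa using h),
    Finset.card_image_of_injective _ (fun a b h => by simpa using h),
    Finset.card_image_of_injective _ (fun a b h => by simpa using h),
    Finset.card_image_of_injective _ (fun a b h => by simpa using h),
    hek, hej,
    hite _ _ _ (fun a b h => by simpa using h) (fun a b h => by simpa using h)
      (fun a b => by simp),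
    hite _ _ _ (fun a b h => by simpa using h) (fun a b h => by simpa using h)
      (fun a b => by simp),
    hite _ _ _ (fun a b h => by simpa using h) (fun a b h => by simpa using h)
      (fun a b => by simp),
    hite _ _ _ (fun a b h => by simpa using h) (fun a b h => by simpa using h)
      (fun a b => by simp)]
  ring
lemma cov_isCover {k : ℕ} {x y : Fin k → Fin k → Bool} {i j : Fin k}
    (hx : x i j = true) (hy : y i j = true) :
    IsVertexCover (Gxy k x y) ↑(cov k i j) := by
  intro u v hadj
  rw [Gxy_adj_iff] at hadj
  obtain ⟨hne, H⟩ := hadj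
  simp only [Finset.coe_sort_coe, Finset.mem_coe]
  rcases H with ⟨i', j', (h | h | h | h)⟩ |
      ⟨h', (h | h | h | h | h | h | h | h)⟩ |
      ⟨i', h', (⟨hb, (h | h | h | h)⟩ | ⟨hb, (h | h | h | h)⟩)⟩ |
      ⟨i', j', (⟨hb, h⟩ | ⟨hb, h⟩)⟩ <;>
    rw [Sym2.eq_iff] at h <;>
    rcases h with ⟨rfl, rfl⟩ | ⟨rfl, rfl⟩ <;>
    simp only [mem_cov_a1, mem_cov_a2, mem_cov_b1, mem_cov_b2, mem_cov_fA1, mem_cov_tA1,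
      mem_cov_fA2, mem_cov_tA2, mem_cov_fB1, mem_cov_tB1, mem_cov_fB2, mem_cov_tB2] <;>
    first
    | exact Bool.eq_false_or_eq_true _
    | exact Or.symm (Bool.eq_false_or_eq_true _)
    | (rcases eq_or_ne i' i with rfl | hh
       · simp [hb]
       · simp [hh])
    | (rcases eq_or_ne i' j with rfl | hh
       · simp [hb]
       · simp [hh])
    | (by_contra hcon
       push_neg at hcon
       obtain ⟨rfl, rfl⟩ := hcon
       first
       | exact hne rfl
       | simp [hx, hy] at hb)
/-- Partition of the vertices: the four cliques, side-1 bit 4-cycles, side-2 bit 4-cycles. -/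
def pt (k : ℕ) : V k → (Fin 4) ⊕ (Fin (Nat.log 2 k)) ⊕ (Fin (Nat.log 2 k))
  | a1 _ => .inl 0
  | a2 _ => .inl 1
  | b1 _ => .inl 2
  | b2 _ => .inl 3
  | fA1 h => .inr (.inl h)
  | tA1 h => .inr (.inl h)
  | fB1 h => .inr (.inl h)
  | tB1 h => .inr (.inl h)
  | fA2 h => .inr (.inr h)
  | tA2 h => .inr (.inr h)
  | fB2 h => .inr (.inr h)
  | tB2 h => .inr (.inr h)

lemma backward {k : ℕ} (hk : 2 ≤ k) {m : ℕ} (hkm : k = 2 ^ m)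
    {x y : Fin k → Fin k → Bool} (U : Set (V k))
    (hcov : IsVertexCover (Gxy k x y) U)
    (hcard : U.ncard = 4 * (k - 1) + 4 * Nat.log 2 k) :
    ∃ i j : Fin k, x i j = true ∧ y i j = true := by
  classical
  have hm : Nat.log 2 k = m := by rw [hkm, Nat.log_pow one_lt_two]
  have hU : U.Finite := Set.toFinite U
  set T : Finset (V k) := hU.toFinset with hT
  have hTcard : T.card = 4 * (k - 1) + 4 * Nat.log 2 k := by
    rw [← Set.ncard_eq_toFinset_card U hU, hcard]
  set F : (Fin 4) ⊕ (Fin (Nat.log 2 k)) ⊕ (Fin (Nat.log 2 k)) → Finset (V k) :=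
    fun p => T.filter (fun v => pt k v = p) with hF
  have hsum : T.card = ∑ p, (F p).card :=
    Finset.card_eq_sum_card_fiberwise (fun v _ => Finset.mem_univ (pt k v))
  -- generic clique lower bound
  have hclique : ∀ (c : Fin k → V k) (p),
      (∀ i i', i ≠ i' → (Gxy k x y).Adj (c i) (c i')) →
      (Function.Injective c) → (∀ i, pt k (c i) = p) →
      k - 1 ≤ (F p).card := by
    intro c p hadj hinj hp
    have h1 : (Finset.univ.filter fun i : Fin k => c i ∉ U).card ≤ 1 := by
      refine Finset.card_le_one.2 fun a ha b hb => ?_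
      simp only [Finset.mem_filter] at ha hb
      by_contra hab
      rcases hcov (hadj a b hab) with h | h
      · exact ha.2 h
      · exact hb.2 h
    have h2 : (Finset.univ.filter fun i : Fin k => c i ∈ U).card +
        (Finset.univ.filter fun i : Fin k => ¬(c i ∈ U)).card = k := by
      rw [Finset.card_filter_add_card_filter_not, Finset.card_univ, Fintype.card_fin]
    have h3 : ((Finset.univ.filter fun i : Fin k => c i ∈ U).image c) ⊆ F p := by
      intro v hv
      obtain ⟨i0, hi0, rfl⟩ := Finset.mem_image.1 hv
      simp only [Finset.mem_filter] at hi0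
      simp only [hF, Finset.mem_filter]
      exact ⟨hU.mem_toFinset.2 hi0.2, hp i0⟩
    have h4 := Finset.card_le_card h3
    rw [Finset.card_image_of_injective _ hinj] at h4
    omega
  -- generic 4-cycle lower bound
  have hpair : ∀ (p) (v1 v2 v3 v4 : V k),
      (Gxy k x y).Adj v1 v2 → (Gxy k x y).Adj v3 v4 →
      pt k v1 = p → pt k v2 = p → pt k v3 = p → pt k v4 = p →
      v1 ≠ v3 → v1 ≠ v4 → v2 ≠ v3 → v2 ≠ v4 →
      2 ≤ (F p).card := by
    intro p v1 v2 v3 v4 h12 h34 p1 p2 p3 p4 h13 h14 h23 h24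
    have mem : ∀ v, v ∈ U → pt k v = p → v ∈ F p := by
      intro v hv hp
      simp only [hF, Finset.mem_filter]
      exact ⟨hU.mem_toFinset.2 hv, hp⟩
    rcases hcov h12 with h | h <;> rcases hcov h34 with h' | h'
    · exact Finset.one_lt_card_iff.2 ⟨v1, v3, mem _ h p1, mem _ h' p3, h13⟩
    · exact Finset.one_lt_card_iff.2 ⟨v1, v4, mem _ h p1, mem _ h' p4, h14⟩
    · exact Finset.one_lt_card_iff.2 ⟨v2, v3, mem _ h p2, mem _ h' p3, h23⟩
    · exact Finset.one_lt_card_iff.2 ⟨v2, v4, mem _ h p2, mem _ h' p4, h24⟩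
  -- adjacency facts
  have adjc : ∀ (i i' : Fin k), i ≠ i' →
      ((Gxy k x y).Adj (a1 i) (a1 i') ∧ (Gxy k x y).Adj (a2 i) (a2 i') ∧
       (Gxy k x y).Adj (b1 i) (b1 i') ∧ (Gxy k x y).Adj (b2 i) (b2 i')) := by
    intro i i' hne
    refine ⟨Gxy_adj_iff.2 ⟨by simp [hne], Or.inl ⟨i, i', Or.inl rfl⟩⟩,
      Gxy_adj_iff.2 ⟨by simp [hne], Or.inl ⟨i, i', Or.inr (Or.inl rfl)⟩⟩,
      Gxy_adj_iff.2 ⟨by simp [hne], Or.inl ⟨i, i', Or.inr (Or.inr (Or.inl rfl))⟩⟩,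
      Gxy_adj_iff.2 ⟨by simp [hne], Or.inl ⟨i, i', Or.inr (Or.inr (Or.inr rfl))⟩⟩⟩
  -- the four misses
  have hLsum : (∑ p : (Fin 4) ⊕ (Fin (Nat.log 2 k)) ⊕ (Fin (Nat.log 2 k)),
      Sum.elim (fun _ => k - 1) (fun _ => 2) p) = 4 * (k - 1) + 4 * Nat.log 2 k := by
    simp [Fintype.sum_sum_type, Finset.sum_const, Fintype.card_fin, mul_comm]
    omega
  have hle : ∀ p ∈ Finset.univ,
      Sum.elim (fun _ => k - 1) (fun _ : (Fin (Nat.log 2 k)) ⊕ (Fin (Nat.log 2 k)) => 2) p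
        ≤ (F p).card := by
    rintro (q | q | q) -
    · fin_cases q
      · exact hclique a1 _ (fun i i' hne => (adjc i i' hne).1)
          (fun a b hab => by simpa using hab) (fun _ => rfl)
      · exact hclique a2 _ (fun i i' hne => (adjc i i' hne).2.1)
          (fun a b hab => by simpa using hab) (fun _ => rfl)
      · exact hclique b1 _ (fun i i' hne => (adjc i i' hne).2.2.1)
          (fun a b hab => by simpa using hab) (fun _ => rfl)
      · exact hclique b2 _ (fun i i' hne => (adjc i i' hne).2.2.2)
          (fun a b hab => by simpa using hab) (fun _ => rfl)
    · exact hpair _ (fA1 q) (tA1 q) (fB1 q) (tB1 q)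
        (Gxy_adj_iff.2 ⟨by simp, Or.inr (Or.inl ⟨q, Or.inl rfl⟩)⟩)
        (Gxy_adj_iff.2 ⟨by simp, Or.inr (Or.inl ⟨q, Or.inr (Or.inr (Or.inl rfl))⟩)⟩)
        rfl rfl rfl rfl (by simp) (by simp) (by simp) (by simp)
    · exact hpair _ (fA2 q) (tA2 q) (fB2 q) (tB2 q)
        (Gxy_adj_iff.2 ⟨by simp, Or.inr (Or.inl ⟨q, Or.inr (Or.inr (Or.inr (Or.inr
          (Or.inl rfl))))⟩)⟩)
        (Gxy_adj_iff.2 ⟨by simp, Or.inr (Or.inl ⟨q, Or.inr (Or.inr (Or.inr (Or.inr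
          (Or.inr (Or.inr (Or.inl rfl))))))⟩)⟩)
        rfl rfl rfl rfl (by simp) (by simp) (by simp) (by simp)
  have heq : ∀ p ∈ Finset.univ,
      Sum.elim (fun _ => k - 1) (fun _ : (Fin (Nat.log 2 k)) ⊕ (Fin (Nat.log 2 k)) => 2) p
        = (F p).card :=
    (Finset.sum_eq_sum_iff_of_le hle).1 (by rw [hLsum, ← hsum, hTcard])
  -- each clique misses a vertex
  have hmiss : ∀ (c : Fin k → V k) (p), Function.Injective c → (∀ i, pt k (c i) = p) →
      (F p).card = k - 1 → ∃ i0 : Fin k, c i0 ∉ U := by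
    intro c p hinj hp hc
    by_contra hall
    push_neg at hall
    have hsub : Finset.univ.image c ⊆ F p := by
      intro v hv
      obtain ⟨i0, -, rfl⟩ := Finset.mem_image.1 hv
      simp only [hF, Finset.mem_filter]
      exact ⟨hU.mem_toFinset.2 (hall i0), hp i0⟩
    have := Finset.card_le_card hsub
    rw [Finset.card_image_of_injective _ hinj, Finset.card_univ, Fintype.card_fin, hc] at this
    omega
  obtain ⟨i1, hi1⟩ := hmiss a1 (Sum.inl 0) (fun a b hab => by simpa using hab) (fun _ => rfl)
    ((heq (Sum.inl 0) (Finset.mem_univ _)).symm)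
  obtain ⟨i2, hi2⟩ := hmiss a2 (Sum.inl 1) (fun a b hab => by simpa using hab) (fun _ => rfl)
    ((heq (Sum.inl 1) (Finset.mem_univ _)).symm)
  obtain ⟨j1, hj1⟩ := hmiss b1 (Sum.inl 2) (fun a b hab => by simpa using hab) (fun _ => rfl)
    ((heq (Sum.inl 2) (Finset.mem_univ _)).symm)
  obtain ⟨j2, hj2⟩ := hmiss b2 (Sum.inl 3) (fun a b hab => by simpa using hab) (fun _ => rfl)
    ((heq (Sum.inl 3) (Finset.mem_univ _)).symm)
    -- a triple in a 2-element fiber is impossible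
  have htriple : ∀ (p) (w1 w2 w3 : V k), (F p).card = 2 →
      w1 ∈ U → w2 ∈ U → w3 ∈ U →
      pt k w1 = p → pt k w2 = p → pt k w3 = p →
      w1 ≠ w2 → w1 ≠ w3 → w2 ≠ w3 → False := by
    intro p w1 w2 w3 hc h1 h2 h3 p1 p2 p3 d12 d13 d23
    have hsub : ({w1, w2, w3} : Finset (V k)) ⊆ F p := by
      intro v hv
      simp only [Finset.mem_insert, Finset.mem_singleton] at hv
      simp only [hF, Finset.mem_filter]
      rcases hv with rfl | rfl | rfl
      exacts [⟨hU.mem_toFinset.2 h1, p1⟩, ⟨hU.mem_toFinset.2 h2, p2⟩,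
        ⟨hU.mem_toFinset.2 h3, p3⟩]
    have h33 : ({w1, w2, w3} : Finset (V k)).card = 3 := by
      rw [Finset.card_insert_of_notMem (by simp [d12, d13]),
        Finset.card_insert_of_notMem (by simp [d23]), Finset.card_singleton]
    have := Finset.card_le_card hsub
    omega
  -- the bin-nodes of the missed vertices are in U
  have hbinA1 : ∀ q : Fin (Nat.log 2 k),
      (if (i1 : ℕ).testBit q.val then tA1 q else fA1 q) ∈ U := by
    intro q
    cases hb : (i1 : ℕ).testBit q.val <;> simp only [if_true, if_false, Bool.false_eq_true]
    · have adj : (Gxy k x y).Adj (a1 i1) (fA1 q) :=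
        Gxy_adj_iff.2 ⟨by simp, Or.inr (Or.inr (Or.inl ⟨i1, q, Or.inl ⟨hb, Or.inl rfl⟩⟩))⟩
      rcases hcov adj with h | h
      · exact absurd h hi1
      · exact h
    · have adj : (Gxy k x y).Adj (a1 i1) (tA1 q) :=
        Gxy_adj_iff.2 ⟨by simp, Or.inr (Or.inr (Or.inl ⟨i1, q, Or.inr ⟨hb, Or.inl rfl⟩⟩))⟩
      rcases hcov adj with h | h
      · exact absurd h hi1
      · exact h
  have hbinB1 : ∀ q : Fin (Nat.log 2 k),
      (if (j1 : ℕ).testBit q.val then tB1 q else fB1 q) ∈ U := by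
    intro q
    cases hb : (j1 : ℕ).testBit q.val <;> simp only [if_true, if_false, Bool.false_eq_true]
    · have adj : (Gxy k x y).Adj (b1 j1) (fB1 q) :=
        Gxy_adj_iff.2 ⟨by simp, Or.inr (Or.inr (Or.inl ⟨j1, q,
          Or.inl ⟨hb, Or.inr (Or.inr (Or.inl rfl))⟩⟩))⟩
      rcases hcov adj with h | h
      · exact absurd h hj1
      · exact h
    · have adj : (Gxy k x y).Adj (b1 j1) (tB1 q) :=
        Gxy_adj_iff.2 ⟨by simp, Or.inr (Or.inr (Or.inl ⟨j1, q,
          Or.inr ⟨hb, Or.inr (Or.inr (Or.inl rfl))⟩⟩))⟩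
      rcases hcov adj with h | h
      · exact absurd h hj1
      · exact h
  have hbinA2 : ∀ q : Fin (Nat.log 2 k),
      (if (i2 : ℕ).testBit q.val then tA2 q else fA2 q) ∈ U := by
    intro q
    cases hb : (i2 : ℕ).testBit q.val <;> simp only [if_true, if_false, Bool.false_eq_true]
    · have adj : (Gxy k x y).Adj (a2 i2) (fA2 q) :=
        Gxy_adj_iff.2 ⟨by simp, Or.inr (Or.inr (Or.inl ⟨i2, q,
          Or.inl ⟨hb, Or.inr (Or.inl rfl)⟩⟩))⟩
      rcases hcov adj with h | h
      · exact absurd h hi2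
      · exact h
    · have adj : (Gxy k x y).Adj (a2 i2) (tA2 q) :=
        Gxy_adj_iff.2 ⟨by simp, Or.inr (Or.inr (Or.inl ⟨i2, q,
          Or.inr ⟨hb, Or.inr (Or.inl rfl)⟩⟩))⟩
      rcases hcov adj with h | h
      · exact absurd h hi2
      · exact h
  have hbinB2 : ∀ q : Fin (Nat.log 2 k),
      (if (j2 : ℕ).testBit q.val then tB2 q else fB2 q) ∈ U := by
    intro q
    cases hb : (j2 : ℕ).testBit q.val <;> simp only [if_true, if_false, Bool.false_eq_true]
    · have adj : (Gxy k x y).Adj (b2 j2) (fB2 q) :=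
        Gxy_adj_iff.2 ⟨by simp, Or.inr (Or.inr (Or.inl ⟨j2, q,
          Or.inl ⟨hb, Or.inr (Or.inr (Or.inr rfl))⟩⟩))⟩
      rcases hcov adj with h | h
      · exact absurd h hj2
      · exact h
    · have adj : (Gxy k x y).Adj (b2 j2) (tB2 q) :=
        Gxy_adj_iff.2 ⟨by simp, Or.inr (Or.inr (Or.inl ⟨j2, q,
          Or.inr ⟨hb, Or.inr (Or.inr (Or.inr rfl))⟩⟩))⟩
      rcases hcov adj with h | h
      · exact absurd h hj2
      · exact h
  -- bits agree
  have hb1 : ∀ q : Fin (Nat.log 2 k), (i1 : ℕ).testBit q.val = (j1 : ℕ).testBit q.val := by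
    intro q
    have h2c : (F (Sum.inr (Sum.inl q))).card = 2 :=
      (heq (Sum.inr (Sum.inl q)) (Finset.mem_univ _)).symm
    have m1 := hbinA1 q
    have m2 := hbinB1 q
    cases hbi : (i1 : ℕ).testBit q.val <;> cases hbj : (j1 : ℕ).testBit q.val <;>
      simp only [hbi, hbj, if_true, if_false, Bool.false_eq_true] at m1 m2 ⊢
    · -- i-bit false, j-bit true : fA1 q, tB1 q ∈ U ; edge tA1–fB1 gives a third
      exfalso
      have adj : (Gxy k x y).Adj (tA1 q) (fB1 q) :=
        Gxy_adj_iff.2 ⟨by simp, Or.inr (Or.inl ⟨q, Or.inr (Or.inl rfl)⟩)⟩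
      rcases hcov adj with h | h
      · exact htriple _ (fA1 q) (tB1 q) (tA1 q) h2c m1 m2 h rfl rfl rfl
          (by simp) (by simp) (by simp)
      · exact htriple _ (fA1 q) (tB1 q) (fB1 q) h2c m1 m2 h rfl rfl rfl
          (by simp) (by simp) (by simp)
    · -- i-bit true, j-bit false : tA1 q, fB1 q ∈ U ; edge tB1–fA1 gives a third
      exfalso
      have adj : (Gxy k x y).Adj (tB1 q) (fA1 q) :=
        Gxy_adj_iff.2 ⟨by simp, Or.inr (Or.inl ⟨q, Or.inr (Or.inr (Or.inr (Or.inl rfl)))⟩)⟩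
      rcases hcov adj with h | h
      · exact htriple _ (tA1 q) (fB1 q) (tB1 q) h2c m1 m2 h rfl rfl rfl
          (by simp) (by simp) (by simp)
      · exact htriple _ (tA1 q) (fB1 q) (fA1 q) h2c m1 m2 h rfl rfl rfl
          (by simp) (by simp) (by simp)
  have hb2 : ∀ q : Fin (Nat.log 2 k), (i2 : ℕ).testBit q.val = (j2 : ℕ).testBit q.val := by
    intro q
    have h2c : (F (Sum.inr (Sum.inr q))).card = 2 :=
      (heq (Sum.inr (Sum.inr q)) (Finset.mem_univ _)).symm
    have m1 := hbinA2 q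
    have m2 := hbinB2 q
    cases hbi : (i2 : ℕ).testBit q.val <;> cases hbj : (j2 : ℕ).testBit q.val <;>
      simp only [hbi, hbj, if_true, if_false, Bool.false_eq_true] at m1 m2 ⊢
    · exfalso
      have adj : (Gxy k x y).Adj (tA2 q) (fB2 q) :=
        Gxy_adj_iff.2 ⟨by simp, Or.inr (Or.inl ⟨q, Or.inr (Or.inr (Or.inr (Or.inr
          (Or.inr (Or.inl rfl)))))⟩)⟩
      rcases hcov adj with h | h
      · exact htriple _ (fA2 q) (tB2 q) (tA2 q) h2c m1 m2 h rfl rfl rfl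
          (by simp) (by simp) (by simp)
      · exact htriple _ (fA2 q) (tB2 q) (fB2 q) h2c m1 m2 h rfl rfl rfl
          (by simp) (by simp) (by simp)
    · exfalso
      have adj : (Gxy k x y).Adj (tB2 q) (fA2 q) :=
        Gxy_adj_iff.2 ⟨by simp, Or.inr (Or.inl ⟨q, Or.inr (Or.inr (Or.inr (Or.inr
          (Or.inr (Or.inr (Or.inr rfl))))))⟩)⟩
      rcases hcov adj with h | h
      · exact htriple _ (tA2 q) (fB2 q) (tB2 q) h2c m1 m2 h rfl rfl rfl
          (by simp) (by simp) (by simp)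
      · exact htriple _ (tA2 q) (fB2 q) (fA2 q) h2c m1 m2 h rfl rfl rfl
          (by simp) (by simp) (by simp)
  -- conclude index equality
  have hlt : ∀ i0 : Fin k, ∀ q : ℕ, ¬ q < Nat.log 2 k → (i0 : ℕ).testBit q = false := by
    intro i0 q hq
    have h1 : (i0 : ℕ) < 2 ^ m := by rw [← hkm]; exact i0.isLt
    exact Nat.testBit_lt_two_pow
      (lt_of_lt_of_le h1 (Nat.pow_le_pow_right (by norm_num) (by omega)))
  have e1 : i1 = j1 := by
    refine Fin.ext (Nat.eq_of_testBit_eq fun q => ?_)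
    by_cases hq : q < Nat.log 2 k
    · exact hb1 ⟨q, hq⟩
    · rw [hlt i1 q hq, hlt j1 q hq]
  have e2 : i2 = j2 := by
    refine Fin.ext (Nat.eq_of_testBit_eq fun q => ?_)
    by_cases hq : q < Nat.log 2 k
    · exact hb2 ⟨q, hq⟩
    · rw [hlt i2 q hq, hlt j2 q hq]
  rw [← e1] at hj1
  rw [← e2] at hj2
  refine ⟨i1, i2, ?_, ?_⟩
  · cases hxb : x i1 i2
    · exfalso
      have adj : (Gxy k x y).Adj (a1 i1) (a2 i2) :=
        Gxy_adj_iff.2 ⟨by simp, Or.inr (Or.inr (Or.inr ⟨i1, i2, Or.inl ⟨hxb, rfl⟩⟩))⟩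
      rcases hcov adj with h | h
      · exact hi1 h
      · exact hi2 h
    · rfl
  · cases hyb : y i1 i2
    · exfalso
      have adj : (Gxy k x y).Adj (b1 i1) (b2 i2) :=
        Gxy_adj_iff.2 ⟨by simp, Or.inr (Or.inr (Or.inr ⟨i1, i2, Or.inr ⟨hyb, rfl⟩⟩))⟩
      rcases hcov adj with h | h
      · exact hj1 h
      · exact hj2 h
    · rfl

/-- `G_{x,y}` has a vertex cover of cardinality `4(k−1) + 4·log k` iff there is a pair
`(i,j)` with `x_{i,j} = 1` and `y_{i,j} = 1` (i.e. iff Set Disjointness is false). -/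
theorem exists_vertexCover_iff_not_disjoint (k : ℕ) (hk : 2 ≤ k)
    (hpow : ∃ m : ℕ, k = 2 ^ m) (x y : Fin k → Fin k → Bool) :
    (∃ U : Set (V k), IsVertexCover (Gxy k x y) U ∧
        U.ncard = 4 * (k - 1) + 4 * Nat.log 2 k) ↔
      (∃ i j : Fin k, x i j = true ∧ y i j = true) := by
  obtain ⟨m, hkm⟩ := hpow
  constructor
  · rintro ⟨U, hcov, hcard⟩
    exact backward hk hkm U hcov hcard
  · rintro ⟨i, j, hxv, hyv⟩
    exact ⟨↑(cov k i j), cov_isCover hxv hyv,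
      by rw [Set.ncard_coe_finset, cov_card hk]⟩

end VCLowerBound
end

section
/- The graph G_{x,y} has an independent set of cardinality 4 + 4·log k if and only if there exists a pair (i,j) ∈ {0,…,k−1}² with x_{i,j} = 1 and y_{i,j} = 1. (Note that G_{x,y} has 4k + 8·log k vertices, and a vertex set is a vertex cover if and only if its complement is an independent set.) -/
namespace VCLowerBound

open V

/-- An independent set: a set of vertices no two of which are adjacent. -/
def IsIndepSet {α : Type*} (G : SimpleGraph α) (U : Set α) : Prop :=
  ∀ u ∈ U, ∀ v ∈ U, ¬ G.Adj u v


variable {k : ℕ} {x y : Fin k → Fin k → Bool}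

private lemma prop_aux {P1 P2 P3 P4 n : Prop} :
    ((((P1 ∨ P2) ∨ P3) ∧ ¬n ∨ P4) ∧ ¬n) ↔ ¬n ∧ (P1 ∨ P2 ∨ P3 ∨ P4) := by tauto

lemma gxy_adj_iff (u v : V k) : (Gxy k x y).Adj u v ↔ u ≠ v ∧
    ((∃ i j : Fin k,
        s(u,v) = s(a1 i, a1 j) ∨ s(u,v) = s(a2 i, a2 j) ∨ s(u,v) = s(b1 i, b1 j) ∨ s(u,v) = s(b2 i, b2 j)) ∨
     (∃ h : Fin (Nat.log 2 k),
        s(u,v) = s(fA1 h, tA1 h) ∨ s(u,v) = s(tA1 h, fB1 h) ∨ s(u,v) = s(fB1 h, tB1 h) ∨ s(u,v) = s(tB1 h, fA1 h) ∨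
        s(u,v) = s(fA2 h, tA2 h) ∨ s(u,v) = s(tA2 h, fB2 h) ∨ s(u,v) = s(fB2 h, tB2 h) ∨ s(u,v) = s(tB2 h, fA2 h)) ∨
     (∃ (i : Fin k) (h : Fin (Nat.log 2 k)),
        (i.val.testBit h.val = false ∧
          (s(u,v) = s(a1 i, fA1 h) ∨ s(u,v) = s(a2 i, fA2 h) ∨ s(u,v) = s(b1 i, fB1 h) ∨ s(u,v) = s(b2 i, fB2 h))) ∨
        (i.val.testBit h.val = true ∧
          (s(u,v) = s(a1 i, tA1 h) ∨ s(u,v) = s(a2 i, tA2 h) ∨ s(u,v) = s(b1 i, tB1 h) ∨ s(u,v) = s(b2 i, tB2 h)))) ∨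
     (∃ i j : Fin k,
        (x i j = false ∧ s(u,v) = s(a1 i, a2 j)) ∨ (y i j = false ∧ s(u,v) = s(b1 i, b2 j)))) := by
  simp only [Gxy, G, SimpleGraph.fromEdgeSet_adj, SimpleGraph.edgeSet_fromEdgeSet,
    Set.mem_union, Set.mem_diff, Set.mem_setOf_eq, Sym2.mk_isDiag_iff]
  exact prop_aux


/-- Index type with `4 + 4·log k` elements. -/
abbrev T (k : ℕ) : Type := Fin 4 ⊕ (Fin (Nat.log 2 k) × Fin 2 × Fin 2)

/-- Classifier: cliques to `inl`, bit-gadget 4-cycles (per level and side) to `inr`,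
with the `A`/`B` distinction in the last coordinate. -/
def phi : V k → T k
  | a1 _ => .inl 0
  | a2 _ => .inl 1
  | b1 _ => .inl 2
  | b2 _ => .inl 3
  | fA1 h => .inr (h, 0, 0)
  | tA1 h => .inr (h, 0, 0)
  | fB1 h => .inr (h, 0, 1)
  | tB1 h => .inr (h, 0, 1)
  | fA2 h => .inr (h, 1, 0)
  | tA2 h => .inr (h, 1, 0)
  | fB2 h => .inr (h, 1, 1)
  | tB2 h => .inr (h, 1, 1)

/-- The canonical independent set determined by a pair `(i, j)`. -/
def psi (i j : Fin k) (t : T k) : V k :=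
  match t with
  | .inl n =>
      if n = 0 then a1 i else if n = 1 then a2 j else if n = 2 then b1 i else b2 j
  | .inr (h, s, c) =>
      if s = 0 then
        if c = 0 then (if i.val.testBit h.val then fA1 h else tA1 h)
        else (if i.val.testBit h.val then fB1 h else tB1 h)
      else
        if c = 0 then (if j.val.testBit h.val then fA2 h else tA2 h)
        else (if j.val.testBit h.val then fB2 h else tB2 h)

lemma phi_psi (i j : Fin k) : Function.LeftInverse (phi (k := k)) (psi i j) := by
  rintro (n | ⟨h, s, c⟩)
  · fin_cases n <;> simp [psi, phi]
  · fin_cases s <;> fin_cases c <;> simp only [psi, Fin.ext_iff, Fin.val_zero, Fin.val_one] <;> norm_num <;> split_ifs <;> simp [phi]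


variable {i j : Fin k}

section RangeLemmas

set_option linter.unreachableTactic false
set_option linter.unnecessarySeqFocus false
set_option linter.unusedTactic false

private def rtac := 0 -- marker

lemma range_a1 {p : Fin k} : a1 p ∈ Set.range (psi i j) ↔ p = i := by
  constructor
  · rintro ⟨(n | ⟨h', s, c⟩), ht⟩
    · fin_cases n <;> simp [psi] at ht <;> simp_all
    · fin_cases s <;> fin_cases c <;>
        simp only [psi, Fin.ext_iff, Fin.val_zero, Fin.val_one] at ht <;>
        norm_num at ht <;> split_ifs at ht <;> simp_all
  · rintro rfl; exact ⟨.inl 0, by simp [psi]⟩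

lemma range_a2 {p : Fin k} : a2 p ∈ Set.range (psi i j) ↔ p = j := by
  constructor
  · rintro ⟨(n | ⟨h', s, c⟩), ht⟩
    · fin_cases n <;> simp [psi] at ht <;> simp_all
    · fin_cases s <;> fin_cases c <;>
        simp only [psi, Fin.ext_iff, Fin.val_zero, Fin.val_one] at ht <;>
        norm_num at ht <;> split_ifs at ht <;> simp_all
  · rintro rfl; exact ⟨.inl 1, by simp [psi]⟩

lemma range_b1 {p : Fin k} : b1 p ∈ Set.range (psi i j) ↔ p = i := by
  constructor
  · rintro ⟨(n | ⟨h', s, c⟩), ht⟩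
    · fin_cases n <;> simp [psi] at ht <;> simp_all
    · fin_cases s <;> fin_cases c <;>
        simp only [psi, Fin.ext_iff, Fin.val_zero, Fin.val_one] at ht <;>
        norm_num at ht <;> split_ifs at ht <;> simp_all
  · rintro rfl; exact ⟨.inl 2, by simp [psi]⟩

lemma range_b2 {p : Fin k} : b2 p ∈ Set.range (psi i j) ↔ p = j := by
  constructor
  · rintro ⟨(n | ⟨h', s, c⟩), ht⟩
    · fin_cases n <;> simp [psi] at ht <;> simp_all
    · fin_cases s <;> fin_cases c <;>
        simp only [psi, Fin.ext_iff, Fin.val_zero, Fin.val_one] at ht <;>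
        norm_num at ht <;> split_ifs at ht <;> simp_all
  · rintro rfl; exact ⟨.inl 3, by simp [psi]⟩

lemma range_fA1 {h : Fin (Nat.log 2 k)} :
    fA1 h ∈ Set.range (psi i j) ↔ i.val.testBit h.val = true := by
  constructor
  · rintro ⟨(n | ⟨h', s, c⟩), ht⟩
    · fin_cases n <;> simp [psi] at ht
    · fin_cases s <;> fin_cases c <;>
        simp only [psi, Fin.ext_iff, Fin.val_zero, Fin.val_one] at ht <;>
        norm_num at ht <;> split_ifs at ht <;> simp_all
  · intro hb; exact ⟨.inr (h, 0, 0), by simp [psi, hb]⟩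

lemma range_tA1 {h : Fin (Nat.log 2 k)} :
    tA1 h ∈ Set.range (psi i j) ↔ i.val.testBit h.val = false := by
  constructor
  · rintro ⟨(n | ⟨h', s, c⟩), ht⟩
    · fin_cases n <;> simp [psi] at ht
    · fin_cases s <;> fin_cases c <;>
        simp only [psi, Fin.ext_iff, Fin.val_zero, Fin.val_one] at ht <;>
        norm_num at ht <;> split_ifs at ht <;> simp_all
  · intro hb; exact ⟨.inr (h, 0, 0), by simp [psi, hb]⟩

lemma range_fB1 {h : Fin (Nat.log 2 k)} :
    fB1 h ∈ Set.range (psi i j) ↔ i.val.testBit h.val = true := by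
  constructor
  · rintro ⟨(n | ⟨h', s, c⟩), ht⟩
    · fin_cases n <;> simp [psi] at ht
    · fin_cases s <;> fin_cases c <;>
        simp only [psi, Fin.ext_iff, Fin.val_zero, Fin.val_one] at ht <;>
        norm_num at ht <;> split_ifs at ht <;> simp_all
  · intro hb; exact ⟨.inr (h, 0, 1), by simp [psi, hb]⟩

lemma range_tB1 {h : Fin (Nat.log 2 k)} :
    tB1 h ∈ Set.range (psi i j) ↔ i.val.testBit h.val = false := by
  constructor
  · rintro ⟨(n | ⟨h', s, c⟩), ht⟩
    · fin_cases n <;> simp [psi] at ht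
    · fin_cases s <;> fin_cases c <;>
        simp only [psi, Fin.ext_iff, Fin.val_zero, Fin.val_one] at ht <;>
        norm_num at ht <;> split_ifs at ht <;> simp_all
  · intro hb; exact ⟨.inr (h, 0, 1), by simp [psi, hb]⟩

lemma range_fA2 {h : Fin (Nat.log 2 k)} :
    fA2 h ∈ Set.range (psi i j) ↔ j.val.testBit h.val = true := by
  constructor
  · rintro ⟨(n | ⟨h', s, c⟩), ht⟩
    · fin_cases n <;> simp [psi] at ht
    · fin_cases s <;> fin_cases c <;>
        simp only [psi, Fin.ext_iff, Fin.val_zero, Fin.val_one] at ht <;>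
        norm_num at ht <;> split_ifs at ht <;> simp_all
  · intro hb; exact ⟨.inr (h, 1, 0), by simp [psi, hb]⟩

lemma range_tA2 {h : Fin (Nat.log 2 k)} :
    tA2 h ∈ Set.range (psi i j) ↔ j.val.testBit h.val = false := by
  constructor
  · rintro ⟨(n | ⟨h', s, c⟩), ht⟩
    · fin_cases n <;> simp [psi] at ht
    · fin_cases s <;> fin_cases c <;>
        simp only [psi, Fin.ext_iff, Fin.val_zero, Fin.val_one] at ht <;>
        norm_num at ht <;> split_ifs at ht <;> simp_all
  · intro hb; exact ⟨.inr (h, 1, 0), by simp [psi, hb]⟩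

lemma range_fB2 {h : Fin (Nat.log 2 k)} :
    fB2 h ∈ Set.range (psi i j) ↔ j.val.testBit h.val = true := by
  constructor
  · rintro ⟨(n | ⟨h', s, c⟩), ht⟩
    · fin_cases n <;> simp [psi] at ht
    · fin_cases s <;> fin_cases c <;>
        simp only [psi, Fin.ext_iff, Fin.val_zero, Fin.val_one] at ht <;>
        norm_num at ht <;> split_ifs at ht <;> simp_all
  · intro hb; exact ⟨.inr (h, 1, 1), by simp [psi, hb]⟩

lemma range_tB2 {h : Fin (Nat.log 2 k)} :
    tB2 h ∈ Set.range (psi i j) ↔ j.val.testBit h.val = false := by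
  constructor
  · rintro ⟨(n | ⟨h', s, c⟩), ht⟩
    · fin_cases n <;> simp [psi] at ht
    · fin_cases s <;> fin_cases c <;>
        simp only [psi, Fin.ext_iff, Fin.val_zero, Fin.val_one] at ht <;>
        norm_num at ht <;> split_ifs at ht <;> simp_all
  · intro hb; exact ⟨.inr (h, 1, 1), by simp [psi, hb]⟩

end RangeLemmas


lemma indep_psi (hx : x i j = true) (hy : y i j = true) :
    IsIndepSet (Gxy k x y) (Set.range (psi i j)) := by
  intro u hu v hv hadj
  rw [gxy_adj_iff] at hadj
  obtain ⟨hne, hc⟩ := hadj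
  rcases hc with ⟨p, q, (hs|hs|hs|hs)⟩ | ⟨h, (hs|hs|hs|hs|hs|hs|hs|hs)⟩ |
      ⟨p, h, (⟨hb, (hs|hs|hs|hs)⟩ | ⟨hb, (hs|hs|hs|hs)⟩)⟩ | ⟨p, q, (⟨hb, hs⟩|⟨hb, hs⟩)⟩ <;>
    rw [Sym2.eq_iff] at hs <;>
    rcases hs with ⟨rfl, rfl⟩ | ⟨rfl, rfl⟩ <;>
      simp only [range_a1, range_a2, range_b1, range_b2, range_fA1, range_tA1, range_fB1,
        range_tB1, range_fA2, range_tA2, range_fB2, range_tB2] at hu hv <;>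
      simp_all


lemma card_T : Nat.card (T k) = 4 + 4 * Nat.log 2 k := by
  simp [Nat.card_eq_fintype_card, Fintype.card_sum, Fintype.card_prod, Fintype.card_fin]
  ring

lemma ncard_range_psi : (Set.range (psi i j)).ncard = 4 + 4 * Nat.log 2 k := by
  rw [← Set.image_univ, Set.ncard_image_of_injective _ (phi_psi i j).injective,
    Set.ncard_univ, card_T]


section AdjLemmas

variable {p q : Fin k} {h : Fin (Nat.log 2 k)}

lemma adj_a1a1 (hpq : p ≠ q) : (Gxy k x y).Adj (a1 p) (a1 q) :=
  (gxy_adj_iff _ _).mpr ⟨by simp [hpq], Or.inl ⟨p, q, Or.inl rfl⟩⟩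
lemma adj_a2a2 (hpq : p ≠ q) : (Gxy k x y).Adj (a2 p) (a2 q) :=
  (gxy_adj_iff _ _).mpr ⟨by simp [hpq], Or.inl ⟨p, q, Or.inr (Or.inl rfl)⟩⟩
lemma adj_b1b1 (hpq : p ≠ q) : (Gxy k x y).Adj (b1 p) (b1 q) :=
  (gxy_adj_iff _ _).mpr ⟨by simp [hpq], Or.inl ⟨p, q, Or.inr (Or.inr (Or.inl rfl))⟩⟩
lemma adj_b2b2 (hpq : p ≠ q) : (Gxy k x y).Adj (b2 p) (b2 q) :=
  (gxy_adj_iff _ _).mpr ⟨by simp [hpq], Or.inl ⟨p, q, Or.inr (Or.inr (Or.inr rfl))⟩⟩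

lemma adj_fA1tA1 : (Gxy k x y).Adj (fA1 h) (tA1 h) :=
  (gxy_adj_iff _ _).mpr ⟨by simp, Or.inr (Or.inl ⟨h, Or.inl rfl⟩)⟩
lemma adj_tA1fB1 : (Gxy k x y).Adj (tA1 h) (fB1 h) :=
  (gxy_adj_iff _ _).mpr ⟨by simp, Or.inr (Or.inl ⟨h, Or.inr (Or.inl rfl)⟩)⟩
lemma adj_fB1tB1 : (Gxy k x y).Adj (fB1 h) (tB1 h) :=
  (gxy_adj_iff _ _).mpr ⟨by simp, Or.inr (Or.inl ⟨h, Or.inr (Or.inr (Or.inl rfl))⟩)⟩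
lemma adj_tB1fA1 : (Gxy k x y).Adj (tB1 h) (fA1 h) :=
  (gxy_adj_iff _ _).mpr ⟨by simp, Or.inr (Or.inl ⟨h, Or.inr (Or.inr (Or.inr (Or.inl rfl)))⟩)⟩
lemma adj_fA2tA2 : (Gxy k x y).Adj (fA2 h) (tA2 h) :=
  (gxy_adj_iff _ _).mpr ⟨by simp,
    Or.inr (Or.inl ⟨h, Or.inr (Or.inr (Or.inr (Or.inr (Or.inl rfl))))⟩)⟩
lemma adj_tA2fB2 : (Gxy k x y).Adj (tA2 h) (fB2 h) :=
  (gxy_adj_iff _ _).mpr ⟨by simp,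
    Or.inr (Or.inl ⟨h, Or.inr (Or.inr (Or.inr (Or.inr (Or.inr (Or.inl rfl)))))⟩)⟩
lemma adj_fB2tB2 : (Gxy k x y).Adj (fB2 h) (tB2 h) :=
  (gxy_adj_iff _ _).mpr ⟨by simp,
    Or.inr (Or.inl ⟨h, Or.inr (Or.inr (Or.inr (Or.inr (Or.inr (Or.inr (Or.inl rfl))))))⟩)⟩
lemma adj_tB2fA2 : (Gxy k x y).Adj (tB2 h) (fA2 h) :=
  (gxy_adj_iff _ _).mpr ⟨by simp,
    Or.inr (Or.inl ⟨h, Or.inr (Or.inr (Or.inr (Or.inr (Or.inr (Or.inr (Or.inr rfl))))))⟩)⟩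

lemma adj_a1fA1 (hb : p.val.testBit h.val = false) : (Gxy k x y).Adj (a1 p) (fA1 h) :=
  (gxy_adj_iff _ _).mpr ⟨by simp, Or.inr (Or.inr (Or.inl ⟨p, h, Or.inl ⟨hb, Or.inl rfl⟩⟩))⟩
lemma adj_a2fA2 (hb : p.val.testBit h.val = false) : (Gxy k x y).Adj (a2 p) (fA2 h) :=
  (gxy_adj_iff _ _).mpr ⟨by simp,
    Or.inr (Or.inr (Or.inl ⟨p, h, Or.inl ⟨hb, Or.inr (Or.inl rfl)⟩⟩))⟩
lemma adj_b1fB1 (hb : p.val.testBit h.val = false) : (Gxy k x y).Adj (b1 p) (fB1 h) :=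
  (gxy_adj_iff _ _).mpr ⟨by simp,
    Or.inr (Or.inr (Or.inl ⟨p, h, Or.inl ⟨hb, Or.inr (Or.inr (Or.inl rfl))⟩⟩))⟩
lemma adj_b2fB2 (hb : p.val.testBit h.val = false) : (Gxy k x y).Adj (b2 p) (fB2 h) :=
  (gxy_adj_iff _ _).mpr ⟨by simp,
    Or.inr (Or.inr (Or.inl ⟨p, h, Or.inl ⟨hb, Or.inr (Or.inr (Or.inr rfl))⟩⟩))⟩
lemma adj_a1tA1 (hb : p.val.testBit h.val = true) : (Gxy k x y).Adj (a1 p) (tA1 h) :=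
  (gxy_adj_iff _ _).mpr ⟨by simp, Or.inr (Or.inr (Or.inl ⟨p, h, Or.inr ⟨hb, Or.inl rfl⟩⟩))⟩
lemma adj_a2tA2 (hb : p.val.testBit h.val = true) : (Gxy k x y).Adj (a2 p) (tA2 h) :=
  (gxy_adj_iff _ _).mpr ⟨by simp,
    Or.inr (Or.inr (Or.inl ⟨p, h, Or.inr ⟨hb, Or.inr (Or.inl rfl)⟩⟩))⟩
lemma adj_b1tB1 (hb : p.val.testBit h.val = true) : (Gxy k x y).Adj (b1 p) (tB1 h) :=
  (gxy_adj_iff _ _).mpr ⟨by simp,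
    Or.inr (Or.inr (Or.inl ⟨p, h, Or.inr ⟨hb, Or.inr (Or.inr (Or.inl rfl))⟩⟩))⟩
lemma adj_b2tB2 (hb : p.val.testBit h.val = true) : (Gxy k x y).Adj (b2 p) (tB2 h) :=
  (gxy_adj_iff _ _).mpr ⟨by simp,
    Or.inr (Or.inr (Or.inl ⟨p, h, Or.inr ⟨hb, Or.inr (Or.inr (Or.inr rfl))⟩⟩))⟩

lemma adj_x (hb : x p q = false) : (Gxy k x y).Adj (a1 p) (a2 q) :=
  (gxy_adj_iff _ _).mpr ⟨by simp, Or.inr (Or.inr (Or.inr ⟨p, q, Or.inl ⟨hb, rfl⟩⟩))⟩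
lemma adj_y (hb : y p q = false) : (Gxy k x y).Adj (b1 p) (b2 q) :=
  (gxy_adj_iff _ _).mpr ⟨by simp, Or.inr (Or.inr (Or.inr ⟨p, q, Or.inr ⟨hb, rfl⟩⟩))⟩

end AdjLemmas


set_option maxHeartbeats 2000000 in
lemma injOn_phi {U : Set (V k)} (hind : IsIndepSet (Gxy k x y) U) :
    Set.InjOn (phi (k := k)) U := by
  intro u hu v hv he
  cases u <;> cases v <;> try (simp (config := { decide := true }) [phi] at he)
  all_goals first
    | rfl
    | (exact congrArg _ he)
    | (subst he; first
        | exact absurd adj_fA1tA1 (hind _ hu _ hv)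
        | exact absurd adj_fA1tA1 (hind _ hv _ hu)
        | exact absurd adj_fB1tB1 (hind _ hu _ hv)
        | exact absurd adj_fB1tB1 (hind _ hv _ hu)
        | exact absurd adj_fA2tA2 (hind _ hu _ hv)
        | exact absurd adj_fA2tA2 (hind _ hv _ hu)
        | exact absurd adj_fB2tB2 (hind _ hu _ hv)
        | exact absurd adj_fB2tB2 (hind _ hv _ hu))
    | (by_contra hne; first
        | exact hind _ hu _ hv (adj_a1a1 (fun hpq => hne (by rw [hpq])))
        | exact hind _ hu _ hv (adj_a2a2 (fun hpq => hne (by rw [hpq])))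
        | exact hind _ hu _ hv (adj_b1b1 (fun hpq => hne (by rw [hpq])))
        | exact hind _ hu _ hv (adj_b2b2 (fun hpq => hne (by rw [hpq]))))


/-- `G_{x,y}` has an independent set of cardinality `4 + 4·log k` iff there is a pair
`(i,j)` with `x_{i,j} = 1` and `y_{i,j} = 1` (i.e. iff Set Disjointness is false). -/
theorem exists_indepSet_iff_not_disjoint (k : ℕ) (hk : 2 ≤ k)
    (hpow : ∃ m : ℕ, k = 2 ^ m) (x y : Fin k → Fin k → Bool) :
    (∃ U : Set (V k), IsIndepSet (Gxy k x y) U ∧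
        U.ncard = 4 + 4 * Nat.log 2 k) ↔
      (∃ i j : Fin k, x i j = true ∧ y i j = true) := by
  constructor
  · rintro ⟨U, hind, hcard⟩
    have hinj : Set.InjOn (phi (k := k)) U := injOn_phi hind
    have himg : phi '' U = Set.univ := by
      apply Set.eq_of_subset_of_ncard_le (Set.subset_univ _)
      rw [Set.ncard_univ, card_T, ← hcard, Set.ncard_image_of_injOn hinj]
    have hsurj : ∀ t : T k, ∃ u ∈ U, phi u = t := by
      intro t
      have ht : t ∈ phi '' U := himg ▸ Set.mem_univ t
      obtain ⟨u, hu, hp⟩ := ht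
      exact ⟨u, hu, hp⟩
    -- extract the clique representatives
    obtain ⟨ia, hia⟩ : ∃ p, a1 p ∈ U := by
      obtain ⟨u, hu, hp⟩ := hsurj (.inl 0)
      cases u <;> simp (config := { decide := true }) [phi] at hp
      exact ⟨_, hu⟩
    obtain ⟨ja, hja⟩ : ∃ p, a2 p ∈ U := by
      obtain ⟨u, hu, hp⟩ := hsurj (.inl 1)
      cases u <;> simp (config := { decide := true }) [phi] at hp
      exact ⟨_, hu⟩
    obtain ⟨ib, hib⟩ : ∃ p, b1 p ∈ U := by
      obtain ⟨u, hu, hp⟩ := hsurj (.inl 2)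
      cases u <;> simp (config := { decide := true }) [phi] at hp
      exact ⟨_, hu⟩
    obtain ⟨jb, hjb⟩ : ∃ p, b2 p ∈ U := by
      obtain ⟨u, hu, hp⟩ := hsurj (.inl 3)
      cases u <;> simp (config := { decide := true }) [phi] at hp
      exact ⟨_, hu⟩
    -- extract the bit representatives
    have hA1 : ∀ h : Fin (Nat.log 2 k), fA1 h ∈ U ∨ tA1 h ∈ U := by
      intro h
      obtain ⟨u, hu, hp⟩ := hsurj (.inr (h, 0, 0))
      cases u <;> simp (config := { decide := true }) [phi] at hp
      · exact Or.inl (hp ▸ hu)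
      · exact Or.inr (hp ▸ hu)
    have hB1 : ∀ h : Fin (Nat.log 2 k), fB1 h ∈ U ∨ tB1 h ∈ U := by
      intro h
      obtain ⟨u, hu, hp⟩ := hsurj (.inr (h, 0, 1))
      cases u <;> simp (config := { decide := true }) [phi] at hp
      · exact Or.inl (hp ▸ hu)
      · exact Or.inr (hp ▸ hu)
    have hA2 : ∀ h : Fin (Nat.log 2 k), fA2 h ∈ U ∨ tA2 h ∈ U := by
      intro h
      obtain ⟨u, hu, hp⟩ := hsurj (.inr (h, 1, 0))
      cases u <;> simp (config := { decide := true }) [phi] at hp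
      · exact Or.inl (hp ▸ hu)
      · exact Or.inr (hp ▸ hu)
    have hB2 : ∀ h : Fin (Nat.log 2 k), fB2 h ∈ U ∨ tB2 h ∈ U := by
      intro h
      obtain ⟨u, hu, hp⟩ := hsurj (.inr (h, 1, 1))
      cases u <;> simp (config := { decide := true }) [phi] at hp
      · exact Or.inl (hp ▸ hu)
      · exact Or.inr (hp ▸ hu)
    -- bits of ia and ib agree
    have hbitsA : ∀ h : Fin (Nat.log 2 k), ia.val.testBit h.val = ib.val.testBit h.val := by
      intro h
      rcases hA1 h with hf | ht
      · have h1 : ia.val.testBit h.val = true := by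
          cases hba : ia.val.testBit h.val
          · exact absurd (adj_a1fA1 hba) (hind _ hia _ hf)
          · rfl
        have h2 : fB1 h ∈ U := by
          rcases hB1 h with hf' | ht'
          · exact hf'
          · exact absurd adj_tB1fA1.symm (hind _ hf _ ht')
        have h3 : ib.val.testBit h.val = true := by
          cases hbb : ib.val.testBit h.val
          · exact absurd (adj_b1fB1 hbb) (hind _ hib _ h2)
          · rfl
        rw [h1, h3]
      · have h1 : ia.val.testBit h.val = false := by
          cases hba : ia.val.testBit h.val
          · rfl
          · exact absurd (adj_a1tA1 hba) (hind _ hia _ ht)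
        have h2 : tB1 h ∈ U := by
          rcases hB1 h with hf' | ht'
          · exact absurd adj_tA1fB1 (hind _ ht _ hf')
          · exact ht'
        have h3 : ib.val.testBit h.val = false := by
          cases hbb : ib.val.testBit h.val
          · rfl
          · exact absurd (adj_b1tB1 hbb) (hind _ hib _ h2)
        rw [h1, h3]
    have hbitsB : ∀ h : Fin (Nat.log 2 k), ja.val.testBit h.val = jb.val.testBit h.val := by
      intro h
      rcases hA2 h with hf | ht
      · have h1 : ja.val.testBit h.val = true := by
          cases hba : ja.val.testBit h.val
          · exact absurd (adj_a2fA2 hba) (hind _ hja _ hf)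
          · rfl
        have h2 : fB2 h ∈ U := by
          rcases hB2 h with hf' | ht'
          · exact hf'
          · exact absurd adj_tB2fA2.symm (hind _ hf _ ht')
        have h3 : jb.val.testBit h.val = true := by
          cases hbb : jb.val.testBit h.val
          · exact absurd (adj_b2fB2 hbb) (hind _ hjb _ h2)
          · rfl
        rw [h1, h3]
      · have h1 : ja.val.testBit h.val = false := by
          cases hba : ja.val.testBit h.val
          · rfl
          · exact absurd (adj_a2tA2 hba) (hind _ hja _ ht)
        have h2 : tB2 h ∈ U := by
          rcases hB2 h with hf' | ht'
          · exact absurd adj_tA2fB2 (hind _ ht _ hf')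
          · exact ht'
        have h3 : jb.val.testBit h.val = false := by
          cases hbb : jb.val.testBit h.val
          · rfl
          · exact absurd (adj_b2tB2 hbb) (hind _ hjb _ h2)
        rw [h1, h3]
    -- conclude ia = ib and ja = jb
    have hk2 : k = 2 ^ Nat.log 2 k := by
      obtain ⟨m, rfl⟩ := hpow
      rw [Nat.log_pow one_lt_two]
    have keyeq : ∀ (p q : Fin k),
        (∀ h : Fin (Nat.log 2 k), p.val.testBit h.val = q.val.testBit h.val) → p = q := by
      intro p q hb
      apply Fin.ext
      apply Nat.eq_of_testBit_eq
      intro n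
      by_cases hn : n < Nat.log 2 k
      · exact hb ⟨n, hn⟩
      · have h1 : p.val.testBit n = false :=
          Nat.testBit_lt_two_pow (lt_of_lt_of_le (hk2 ▸ p.isLt)
            (Nat.pow_le_pow_right (by norm_num) (le_of_not_gt hn)))
        have h2 : q.val.testBit n = false :=
          Nat.testBit_lt_two_pow (lt_of_lt_of_le (hk2 ▸ q.isLt)
            (Nat.pow_le_pow_right (by norm_num) (le_of_not_gt hn)))
        rw [h1, h2]
    have hiab : ia = ib := keyeq _ _ hbitsA
    have hjab : ja = jb := keyeq _ _ hbitsB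
    subst hiab hjab
    refine ⟨ia, ja, ?_, ?_⟩
    · cases hxv : x ia ja
      · exact absurd (adj_x hxv) (hind _ hia _ hja)
      · rfl
    · cases hyv : y ia ja
      · exact absurd (adj_y hyv) (hind _ hib _ hjb)
      · rfl
  · rintro ⟨i, j, hx, hy⟩
    exact ⟨Set.range (psi i j), indep_psi hx hy, ncard_range_psi⟩

end VCLowerBound
end

section
/- Let H be the graph on the six vertices C_a^0, C_a^1, C_a^2, C_b^0, C_b^1, C_b^2 in which {C_a^0, C_a^1, C_a^2} forms a triangle, {C_b^0, C_b^1, C_b^2} forms a triangle, and C_a^i is adjacent to C_b^j for every i ≠ j ∈ {0,1,2}. Then in every proper 3-coloring of H, the vertices C_a^i and C_b^i receive the same color, for each i ∈ {0,1,2}. -/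
namespace ColorGadget

/-- The six vertices `C_a^0, C_a^1, C_a^2, C_b^0, C_b^1, C_b^2`. -/
inductive HV : Type
  | Ca : Fin 3 → HV
  | Cb : Fin 3 → HV

open HV

/-- The graph `H`: `{C_a^0, C_a^1, C_a^2}` forms a triangle, `{C_b^0, C_b^1, C_b^2}`
forms a triangle, and `C_a^i` is adjacent to `C_b^j` for every `i ≠ j`. -/
def H : SimpleGraph HV :=
  SimpleGraph.fromEdgeSet
    {e | ∃ i j : Fin 3, i ≠ j ∧
      (e = s(Ca i, Ca j) ∨ e = s(Cb i, Cb j) ∨ e = s(Ca i, Cb j))}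

lemma key (a b : Fin 3 → Fin 3)
    (h1 : ∀ i j : Fin 3, i ≠ j → a i ≠ a j)
    (h2 : ∀ i j : Fin 3, i ≠ j → a i ≠ b j) :
    ∀ i, a i = b i := by
  revert h1 h2; revert a b; decide

lemma adj_CaCa {i j : Fin 3} (h : i ≠ j) : H.Adj (Ca i) (Ca j) := by
  constructor
  · exact ⟨i, j, h, Or.inl rfl⟩
  · simp [h]

lemma adj_CbCb {i j : Fin 3} (h : i ≠ j) : H.Adj (Cb i) (Cb j) := by
  constructor
  · exact ⟨i, j, h, Or.inr (Or.inl rfl)⟩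
  · simp [h]

lemma adj_CaCb {i j : Fin 3} (h : i ≠ j) : H.Adj (Ca i) (Cb j) := by
  constructor
  · exact ⟨i, j, h, Or.inr (Or.inr rfl)⟩
  · simp

/-- In every proper 3-coloring of `H`, the vertices `C_a^i` and `C_b^i` receive the
same color, for each `i ∈ {0,1,2}`. -/
theorem color_Ca_eq_color_Cb (c : HV → Fin 3)
    (hc : ∀ u v : HV, H.Adj u v → c u ≠ c v) :
    ∀ i : Fin 3, c (Ca i) = c (Cb i) := by
  exact key (fun i => c (Ca i)) (fun i => c (Cb i))
    (fun i j h => hc _ _ (adj_CaCa h))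
    (fun i j h => hc _ _ (adj_CaCb h))

end ColorGadget
end

section
/- Every cycle in the weighted graph G_{x,y} whose total edge weight equals 2k³ contains exactly two edges of InputEdges. -/
/-!
Every edge of `InputEdges` weighs within `k² - 1` of `k³` and every other edge weighs `0`, so a
closed walk through `c` input edges weighs between `c (k³ - k² + 1)` and `c (k³ + k² - 1)`.
For `k ≥ 3` the value `2k³` lies in this window only when `c = 2`.
-/

namespace WeightedCycle

/-- The vertices of the weighted cycle-detection graph: the sets `A₁, A₂, B₁, B₂`
of size `k` and the four center nodes `c_{A₁}, c_{A₂}, c_{B₁}, c_{B₂}`. -/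
inductive WV (k : ℕ) : Type
  | a1 : Fin k → WV k
  | a2 : Fin k → WV k
  | b1 : Fin k → WV k
  | b2 : Fin k → WV k
  | cA1 : WV k
  | cA2 : WV k
  | cB1 : WV k
  | cB2 : WV k

open WV

/-- The weighted graph `G_{x,y}` (its underlying simple graph): each `c_S` is adjacent
to every node of `S`, the edges `{c_{A₁}, c_{B₁}}` and `{c_{A₂}, c_{B₂}}` are present,
and for each pair `(i,j)`, `{a₁^i, a₂^j}` is an edge iff `x_{i,j} = 1` and
`{b₁^i, b₂^j}` is an edge iff `y_{i,j} = 1`. -/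
def WG (k : ℕ) (x y : Fin k → Fin k → Bool) : SimpleGraph (WV k) :=
  SimpleGraph.fromEdgeSet
    ({e | ∃ i : Fin k,
        e = s(cA1, a1 i) ∨ e = s(cA2, a2 i) ∨ e = s(cB1, b1 i) ∨ e = s(cB2, b2 i)} ∪
     {s(cA1, cB1), s(cA2, cB2)} ∪
     {e | ∃ i j : Fin k,
        (x i j = true ∧ e = s(a1 i, a2 j)) ∨ (y i j = true ∧ e = s(b1 i, b2 j))})

/-- The edge weights: the edge `{a₁^i, a₂^j}` has weight `k³ + k·i + j`, the edge
`{b₁^i, b₂^j}` has weight `k³ − (k·i + j)`, and all other edges have weight `0`. -/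
def wt (k : ℕ) : WV k → WV k → ℕ
  | a1 i, a2 j => k ^ 3 + k * i.val + j.val
  | a2 j, a1 i => k ^ 3 + k * i.val + j.val
  | b1 i, b2 j => k ^ 3 - (k * i.val + j.val)
  | b2 j, b1 i => k ^ 3 - (k * i.val + j.val)
  | _, _ => 0

/-- Whether a (directed) pair of vertices is an edge of `InputEdges`, i.e. has one
endpoint in `A₁` and the other in `A₂`, or one in `B₁` and the other in `B₂`. -/
def isInput {k : ℕ} : WV k → WV k → Bool
  | a1 _, a2 _ => true
  | a2 _, a1 _ => true
  | b1 _, b2 _ => true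
  | b2 _, b1 _ => true
  | _, _ => false

/-- The total weight of a walk: the sum of the weights of its edges. -/
def walkWeight {k : ℕ} {x y : Fin k → Fin k → Bool} {u v : WV k}
    (p : (WG k x y).Walk u v) : ℕ :=
  (p.darts.map (fun d => wt k d.toProd.1 d.toProd.2)).sum

/-- The number of edges of a walk belonging to `InputEdges`. -/
def inputCount {k : ℕ} {x y : Fin k → Fin k → Bool} {u v : WV k}
    (p : (WG k x y).Walk u v) : ℕ :=
  (p.darts.filter (fun d => isInput d.toProd.1 d.toProd.2)).length

end WeightedCycle

theorem List.sum_map_filter_eq_sum_map {α M : Type*} [AddCommMonoid M] (p : α → Bool)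
    (f : α → M) {l : List α} (h : ∀ a ∈ l, p a = false → f a = 0) :
    ((l.filter p).map f).sum = (l.map f).sum := by
  have hzero : ((l.filter fun a => !p a).map f).sum = 0 := by
    refine List.sum_eq_zero ?_
    simp only [List.mem_map, List.mem_filter, Bool.not_eq_true']
    rintro _ ⟨a, ⟨ha, hpa⟩, rfl⟩
    exact h a ha hpa
  simpa [hzero] using List.sum_map_filter_add_sum_map_filter_not (p · = true) f l

namespace WeightedCycle

lemma wt_eq_zero_of_isInput_eq_false {k : ℕ} {u v : WV k} (h : isInput u v = false) :
    wt k u v = 0 := by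
  cases u <;> cases v <;> first | rfl | simp [isInput] at h

lemma wt_mem_Icc_of_isInput {k : ℕ} {u v : WV k} (h : isInput u v = true) :
    wt k u v ∈ Set.Icc (k ^ 3 - k ^ 2 + 1) (k ^ 3 + k ^ 2 - 1) := by
  have index_lt (i j : Fin k) : k * i + j < k ^ 2 := by
    have := i.isLt; have := j.isLt; nlinarith
  have hk2 (i : Fin k) : 1 ≤ k ^ 2 ∧ k ^ 2 ≤ k ^ 3 :=
    ⟨Nat.one_le_pow _ _ i.pos, Nat.pow_le_pow_right i.pos (by norm_num)⟩
  cases u <;> cases v <;> simp only [isInput, Bool.false_eq_true] at h <;> rename_i i j <;>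
    have := index_lt i j <;> have := index_lt j i <;> have := hk2 i <;>
    simp only [wt, Set.mem_Icc] <;> omega

lemma eq_two_of_mul_le_of_le_mul {k c : ℕ} (hk : 3 ≤ k)
    (hlo : c * (k ^ 3 - k ^ 2 + 1) ≤ 2 * k ^ 3) (hhi : 2 * k ^ 3 ≤ c * (k ^ 3 + k ^ 2 - 1)) :
    c = 2 := by
  have hk3 : 3 * k ^ 2 ≤ k ^ 3 := by nlinarith
  have hk2 : 1 ≤ k ^ 2 := Nat.one_le_pow _ _ (by omega)
  obtain hc | rfl | hc : c ≤ 1 ∨ c = 2 ∨ 3 ≤ c := by omega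
  · have := hhi.trans (Nat.mul_le_mul_right _ hc); omega
  · rfl
  · have := (Nat.mul_le_mul_right _ hc).trans hlo; omega

lemma walkWeight_mem_Icc {k : ℕ} {x y : Fin k → Fin k → Bool} {u v : WV k}
    (p : (WG k x y).Walk u v) :
    walkWeight p ∈
      Set.Icc (inputCount p * (k ^ 3 - k ^ 2 + 1)) (inputCount p * (k ^ 3 + k ^ 2 - 1)) := by
  rw [walkWeight, inputCount, ← List.sum_map_filter_eq_sum_map _ _
    fun d _ => wt_eq_zero_of_isInput_eq_false]
  have hbound : ∀ w ∈ (p.darts.filter fun d => isInput d.toProd.1 d.toProd.2).map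
      (fun d => wt k d.toProd.1 d.toProd.2),
        w ∈ Set.Icc (k ^ 3 - k ^ 2 + 1) (k ^ 3 + k ^ 2 - 1) := by
    simp only [List.mem_map, List.mem_filter]
    rintro _ ⟨d, ⟨-, hd⟩, rfl⟩
    exact wt_mem_Icc_of_isInput hd
  have hlo := List.card_nsmul_le_sum _ _ fun w hw => (hbound w hw).1
  have hhi := List.sum_le_card_nsmul _ _ fun w hw => (hbound w hw).2
  rw [List.length_map, smul_eq_mul] at hlo hhi
  exact ⟨hlo, hhi⟩

theorem cycle_weight_two_input_edges_general (k : ℕ) (hk : 3 ≤ k)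
    (x y : Fin k → Fin k → Bool) (v : WV k) (p : (WG k x y).Walk v v)
    (hw : walkWeight p = 2 * k ^ 3) :
    inputCount p = 2 :=
  eq_two_of_mul_le_of_le_mul hk (hw ▸ (walkWeight_mem_Icc p).1) (hw ▸ (walkWeight_mem_Icc p).2)

/-- Every cycle in `G_{x,y}` of total weight `2k³` contains exactly two edges of
`InputEdges`. -/
theorem cycle_weight_two_input_edges (k : ℕ) (hk : 3 ≤ k)
    (x y : Fin k → Fin k → Bool) (v : WV k) (p : (WG k x y).Walk v v)
    (hcyc : p.IsCycle) (hw : walkWeight p = 2 * k ^ 3) :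
    inputCount p = 2 :=
  cycle_weight_two_input_edges_general k hk x y v p hw

end WeightedCycle
end

section
/- The weighted graph G_{x,y} contains a cycle of length 8 whose total edge weight equals 2k³ if and only if there exists a pair (i,j) ∈ {0,…,k−1}² with x_{i,j} = 1 and y_{i,j} = 1 (i.e., if and only if the Set Disjointness function on x and y evaluates to false). -/
namespace WeightedCycle

open WV

set_option linter.dupNamespace false

/-- Label of a directed input edge. -/
def lbl {k : ℕ} : WV k → WV k → Option (Bool × Fin k × Fin k)
  | a1 i, a2 j => some (true, i, j)
  | a2 j, a1 i => some (true, i, j)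
  | b1 i, b2 j => some (false, i, j)
  | b2 j, b1 i => some (false, i, j)
  | _, _ => none

def wfun (k : ℕ) : Bool × Fin k × Fin k → ℕ
  | (true, i, j) => k ^ 3 + (k * i.val + j.val)
  | (false, i, j) => k ^ 3 - (k * i.val + j.val)

def eol {k : ℕ} : Bool × Fin k × Fin k → Sym2 (WV k)
  | (true, i, j) => s(a1 i, a2 j)
  | (false, i, j) => s(b1 i, b2 j)

lemma wt_eq {k : ℕ} (u v : WV k) : wt k u v = (lbl u v).elim 0 (wfun k) := by
  cases u <;> cases v <;> simp [wt, lbl, wfun, Nat.add_assoc]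

lemma edge_of_lbl {k : ℕ} (u v : WV k) (l : Bool × Fin k × Fin k)
    (h : lbl u v = some l) : s(u, v) = eol l := by
  cases u <;> cases v <;> simp only [lbl] at h <;> cases h <;>
    simp [eol, Sym2.eq_swap]

lemma sum_filterMap {α β : Type*} (f : α → Option β) (w : α → ℕ) (g : β → ℕ)
    (h : ∀ a, w a = (f a).elim 0 g) (L : List α) :
    (L.map w).sum = ((L.filterMap f).map g).sum := by
  induction L with
  | nil => rfl
  | cons a L ih =>
    rw [List.map_cons, List.sum_cons, List.filterMap_cons, h a]
    cases hf : f a <;> simp [ih]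

lemma filterMap_sublist_map {α β : Type*} (f : α → Option β) (g : α → β)
    (h : ∀ a b, f a = some b → g a = b) (L : List α) :
    List.Sublist (L.filterMap f) (L.map g) := by
  induction L with
  | nil => simp
  | cons a L ih =>
    rw [List.filterMap_cons, List.map_cons]
    cases hf : f a with
    | none => exact ih.cons _
    | some b => rw [h a b hf]; exact ih.cons₂ _

lemma m_lt {k : ℕ} (i j : Fin k) : k * i.val + j.val < k ^ 2 := by
  have h1 : j.val < k := j.isLt
  have h2 : k * (i.val + 1) ≤ k * k := Nat.mul_le_mul_left k i.isLt
  rw [Nat.mul_add, Nat.mul_one] at h2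
  rw [pow_two]; omega

lemma mj_inj {k : ℕ} (i j i' j' : Fin k)
    (h : k * i.val + j.val = k * i'.val + j'.val) : i = i' ∧ j = j' := by
  have hj : j.val < k := j.isLt
  have hj' : j'.val < k := j'.isLt
  have hmod : (k * i.val + j.val) % k = (k * i'.val + j'.val) % k := by rw [h]
  rw [Nat.mul_add_mod, Nat.mul_add_mod, Nat.mod_eq_of_lt hj, Nat.mod_eq_of_lt hj'] at hmod
  have hi : k * i.val = k * i'.val := by omega
  have hk : 0 < k := i.pos
  exact ⟨Fin.ext (Nat.eq_of_mul_eq_mul_left hk hi), Fin.ext hmod⟩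

/-- The key arithmetic lemma. -/
lemma key2 {k : ℕ} (hk : 3 ≤ k) (T F : List (Bool × Fin k × Fin k))
    (hndT : T.Nodup) (hndF : F.Nodup)
    (hT : ∀ l ∈ T, l.1 = true) (hF : ∀ l ∈ F, l.1 = false)
    (hsum : ((T ++ F).map (wfun k)).sum = 2 * k ^ 3) :
    ∃ i j : Fin k, (true, i, j) ∈ T ∧ (false, i, j) ∈ F := by
  have hP : 3 * k ^ 2 ≤ k ^ 3 := by
    calc 3 * k ^ 2 ≤ k * k ^ 2 := Nat.mul_le_mul_right _ hk
      _ = k ^ 3 := by ring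
  have hk3 : 0 < k ^ 3 := by positivity
  rw [List.map_append, List.sum_append] at hsum
  match T, hndT, hT with
  | [], _, _ =>
    match F, hndF, hF with
    | [], _, _ =>
      simp at hsum
      omega
    | [(c1, i1, j1)], hndF, hF =>
      have hc1 : c1 = false := hF (c1, i1, j1) (by simp)
      subst hc1
      have hm1 : k * i1.val + j1.val < k ^ 2 := m_lt i1 j1
      simp [wfun] at hsum
      generalize hg3 : k ^ 3 = P3 at hsum hP hk3
      generalize hg2 : k ^ 2 = P2 at hm1 hP
      omega
    | [(c1, i1, j1), (c2, i2, j2)], hndF, hF =>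
      have hc1 : c1 = false := hF (c1, i1, j1) (by simp)
      have hc2 : c2 = false := hF (c2, i2, j2) (by simp)
      subst hc1; subst hc2
      have hm1 : k * i1.val + j1.val < k ^ 2 := m_lt i1 j1
      have hm2 : k * i2.val + j2.val < k ^ 2 := m_lt i2 j2
      simp [wfun] at hsum
      have h0 : k * i1.val + j1.val = k * i2.val + j2.val := by
        generalize hg3 : k ^ 3 = P3 at hsum hP hk3
        generalize hg2 : k ^ 2 = P2 at hm1 hm2 hP
        omega
      obtain ⟨hi, hj⟩ := mj_inj _ _ _ _ h0
      subst hi; subst hj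
      simp at hndF
    | (c1, i1, j1) :: (c2, i2, j2) :: (c3, i3, j3) :: F', hndF, hF =>
      have hc1 : c1 = false := hF (c1, i1, j1) (by simp)
      have hc2 : c2 = false := hF (c2, i2, j2) (by simp)
      have hc3 : c3 = false := hF (c3, i3, j3) (by simp)
      subst hc1; subst hc2; subst hc3
      have hm1 : k * i1.val + j1.val < k ^ 2 := m_lt i1 j1
      have hm2 : k * i2.val + j2.val < k ^ 2 := m_lt i2 j2
      have hm3 : k * i3.val + j3.val < k ^ 2 := m_lt i3 j3
      have hlb : ∀ l ∈ F', 1 ≤ wfun k l := by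
        intro l hl
        have hc : l.1 = false := hF l (by simp [hl])
        obtain ⟨c, i, j⟩ := l
        cases hc
        have := m_lt i j
        simp only [wfun]
        generalize hg3 : k ^ 3 = P3 at hP hk3
        generalize hg2 : k ^ 2 = P2 at this hP
        omega
      have hlb' : 0 ≤ (F'.map (wfun k)).sum := Nat.zero_le _
      simp [wfun] at hsum
      generalize hg3 : k ^ 3 = P3 at hsum hP hk3
      generalize hg2 : k ^ 2 = P2 at hm1 hm2 hm3 hP
      omega
  | [(c1, i1, j1)], hndT, hT =>
    have hc1 : c1 = true := hT (c1, i1, j1) (by simp)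
    subst hc1
    have hm1 : k * i1.val + j1.val < k ^ 2 := m_lt i1 j1
    match F, hndF, hF with
    | [], _, _ =>
      simp [wfun] at hsum
      generalize hg3 : k ^ 3 = P3 at hsum hP hk3
      generalize hg2 : k ^ 2 = P2 at hm1 hP
      omega
    | [(d1, i1', j1')], hndF, hF =>
      have hd1 : d1 = false := hF (d1, i1', j1') (by simp)
      subst hd1
      have hm1' : k * i1'.val + j1'.val < k ^ 2 := m_lt i1' j1'
      simp [wfun] at hsum
      have h0 : k * i1.val + j1.val = k * i1'.val + j1'.val := by
        generalize hg3 : k ^ 3 = P3 at hsum hP hk3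
        generalize hg2 : k ^ 2 = P2 at hm1 hm1' hP
        omega
      obtain ⟨hi, hj⟩ := mj_inj _ _ _ _ h0
      subst hi; subst hj
      exact ⟨i1, j1, by simp, by simp⟩
    | (d1, i1', j1') :: (d2, i2', j2') :: F', hndF, hF =>
      have hd1 : d1 = false := hF (d1, i1', j1') (by simp)
      have hd2 : d2 = false := hF (d2, i2', j2') (by simp)
      subst hd1; subst hd2
      have hm1' : k * i1'.val + j1'.val < k ^ 2 := m_lt i1' j1'
      have hm2' : k * i2'.val + j2'.val < k ^ 2 := m_lt i2' j2'
      simp [wfun] at hsum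
      generalize hg3 : k ^ 3 = P3 at hsum hP hk3
      generalize hg2 : k ^ 2 = P2 at hm1 hm1' hm2' hP
      omega
  | (c1, i1, j1) :: (c2, i2, j2) :: T', hndT, hT =>
    have hc1 : c1 = true := hT (c1, i1, j1) (by simp)
    have hc2 : c2 = true := hT (c2, i2, j2) (by simp)
    subst hc1; subst hc2
    simp [wfun] at hsum
    have h0 : k * i1.val + j1.val = k * i2.val + j2.val := by
      generalize hg3 : k ^ 3 = P3 at hsum hP hk3
      omega
    obtain ⟨hi, hj⟩ := mj_inj _ _ _ _ h0
    subst hi; subst hj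
    simp at hndT

section Adj

variable {k : ℕ} {x y : Fin k → Fin k → Bool}

lemma adj_x_of {i j : Fin k} (h : (WG k x y).Adj (a1 i) (a2 j)) : x i j = true := by
  simp only [WG, SimpleGraph.fromEdgeSet_adj, Set.mem_union, Set.mem_setOf_eq,
    Set.mem_insert_iff, Set.mem_singleton_iff, Sym2.eq_iff] at h
  obtain ⟨h, -⟩ := h
  rcases h with (⟨i', h⟩ | h | h) <;> simp_all [Sym2.eq_iff]

lemma adj_y_of {i j : Fin k} (h : (WG k x y).Adj (b1 i) (b2 j)) : y i j = true := by
  simp only [WG, SimpleGraph.fromEdgeSet_adj, Set.mem_union, Set.mem_setOf_eq,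
    Set.mem_insert_iff, Set.mem_singleton_iff, Sym2.eq_iff] at h
  obtain ⟨h, -⟩ := h
  rcases h with (⟨i', h⟩ | h | h) <;> simp_all [Sym2.eq_iff]

lemma adj_cA1 (i : Fin k) : (WG k x y).Adj cA1 (a1 i) := by
  simp only [WG, SimpleGraph.fromEdgeSet_adj, Set.mem_union, Set.mem_setOf_eq,
    Set.mem_insert_iff, Set.mem_singleton_iff]
  exact ⟨Or.inl (Or.inl ⟨i, Or.inl rfl⟩), by simp⟩

lemma adj_cA2 (i : Fin k) : (WG k x y).Adj cA2 (a2 i) := by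
  simp only [WG, SimpleGraph.fromEdgeSet_adj, Set.mem_union, Set.mem_setOf_eq,
    Set.mem_insert_iff, Set.mem_singleton_iff]
  exact ⟨Or.inl (Or.inl ⟨i, Or.inr (Or.inl rfl)⟩), by simp⟩

lemma adj_cB1 (i : Fin k) : (WG k x y).Adj cB1 (b1 i) := by
  simp only [WG, SimpleGraph.fromEdgeSet_adj, Set.mem_union, Set.mem_setOf_eq,
    Set.mem_insert_iff, Set.mem_singleton_iff]
  exact ⟨Or.inl (Or.inl ⟨i, Or.inr (Or.inr (Or.inl rfl))⟩), by simp⟩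

lemma adj_cB2 (i : Fin k) : (WG k x y).Adj cB2 (b2 i) := by
  simp only [WG, SimpleGraph.fromEdgeSet_adj, Set.mem_union, Set.mem_setOf_eq,
    Set.mem_insert_iff, Set.mem_singleton_iff]
  exact ⟨Or.inl (Or.inl ⟨i, Or.inr (Or.inr (Or.inr rfl))⟩), by simp⟩

lemma adj_c11 : (WG k x y).Adj cA1 cB1 := by
  simp only [WG, SimpleGraph.fromEdgeSet_adj, Set.mem_union, Set.mem_setOf_eq,
    Set.mem_insert_iff, Set.mem_singleton_iff]
  exact ⟨Or.inl (Or.inr (Or.inl trivial)), by simp⟩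

lemma adj_c22 : (WG k x y).Adj cA2 cB2 := by
  simp only [WG, SimpleGraph.fromEdgeSet_adj, Set.mem_union, Set.mem_setOf_eq,
    Set.mem_insert_iff, Set.mem_singleton_iff]
  exact ⟨Or.inl (Or.inr (Or.inr trivial)), by simp⟩

lemma adj_of_x {i j : Fin k} (hx : x i j = true) : (WG k x y).Adj (a1 i) (a2 j) := by
  simp only [WG, SimpleGraph.fromEdgeSet_adj, Set.mem_union, Set.mem_setOf_eq,
    Set.mem_insert_iff, Set.mem_singleton_iff]
  exact ⟨Or.inr ⟨i, j, Or.inl ⟨hx, rfl⟩⟩, by simp⟩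

lemma adj_of_y {i j : Fin k} (hy : y i j = true) : (WG k x y).Adj (b1 i) (b2 j) := by
  simp only [WG, SimpleGraph.fromEdgeSet_adj, Set.mem_union, Set.mem_setOf_eq,
    Set.mem_insert_iff, Set.mem_singleton_iff]
  exact ⟨Or.inr ⟨i, j, Or.inr ⟨hy, rfl⟩⟩, by simp⟩

lemma x_of_lbl (d : (WG k x y).Dart) {i j : Fin k}
    (h : lbl d.toProd.1 d.toProd.2 = some (true, i, j)) : x i j = true := by
  obtain ⟨⟨u, v⟩, hadj⟩ := d
  cases u <;> cases v <;>
    simp only [lbl, Option.some.injEq, Prod.mk.injEq, reduceCtorEq, false_and,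
      true_and, and_false] at h <;>
    obtain ⟨rfl, rfl⟩ := h <;>
    first
      | exact adj_x_of hadj
      | exact adj_x_of hadj.symm

lemma y_of_lbl (d : (WG k x y).Dart) {i j : Fin k}
    (h : lbl d.toProd.1 d.toProd.2 = some (false, i, j)) : y i j = true := by
  obtain ⟨⟨u, v⟩, hadj⟩ := d
  cases u <;> cases v <;>
    simp only [lbl, Option.some.injEq, Prod.mk.injEq, reduceCtorEq, false_and,
      true_and, and_false] at h <;>
    obtain ⟨rfl, rfl⟩ := h <;>
    first
      | exact adj_y_of hadj
      | exact adj_y_of hadj.symm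

end Adj

/-- `G_{x,y}` contains a cycle of length 8 and total weight `2k³` iff there is a pair
`(i,j)` with `x_{i,j} = 1` and `y_{i,j} = 1` (i.e. iff Set Disjointness is false). -/
theorem exists_cycle_iff_not_disjoint (k : ℕ) (hk : 3 ≤ k)
    (x y : Fin k → Fin k → Bool) :
    (∃ (v : WV k) (p : (WG k x y).Walk v v),
        p.IsCycle ∧ p.length = 8 ∧ walkWeight p = 2 * k ^ 3) ↔
      (∃ i j : Fin k, x i j = true ∧ y i j = true) := by
  constructor
  · rintro ⟨v, p, hc, hlen, hw⟩
    classical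
    set M := p.darts.filterMap (fun d => lbl d.toProd.1 d.toProd.2) with hM
    have hwt : (M.map (wfun k)).sum = 2 * k ^ 3 := by
      have h0 := sum_filterMap (fun d : (WG k x y).Dart => lbl d.toProd.1 d.toProd.2)
        (fun d => wt k d.toProd.1 d.toProd.2) (wfun k)
        (fun d => wt_eq d.toProd.1 d.toProd.2) p.darts
      rw [hM, ← h0]
      exact hw
    have hedges : p.edges = p.darts.map SimpleGraph.Dart.edge := rfl
    have hndM : M.Nodup := by
      have he : p.edges.Nodup := hc.edges_nodup
      rw [hedges] at he
      have hsub : List.Sublist (M.map eol) (p.darts.map SimpleGraph.Dart.edge) := by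
        rw [hM, List.map_filterMap]
        refine filterMap_sublist_map _ _ (fun d l h => ?_) _
        obtain ⟨l', hl', rfl⟩ := Option.map_eq_some_iff.mp h
        have h2 := edge_of_lbl d.toProd.1 d.toProd.2 l' hl'
        simpa [SimpleGraph.Dart.edge] using h2
      exact List.Nodup.of_map _ (hsub.nodup he)
    have hmemd : ∀ l ∈ M, ∃ d ∈ p.darts, lbl d.toProd.1 d.toProd.2 = some l := by
      intro l hl
      rw [hM] at hl
      exact List.mem_filterMap.mp hl
    set T := M.filter (fun l => l.1) with hT
    set F := M.filter (fun l => !l.1) with hF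
    have hperm : (T ++ F).Perm M := List.filter_append_perm _ M
    have hsum : ((T ++ F).map (wfun k)).sum = 2 * k ^ 3 := by
      rw [(hperm.map (wfun k)).sum_eq, hwt]
    obtain ⟨i, j, hiT, hjF⟩ := key2 hk T F (hndM.filter _) (hndM.filter _)
      (fun l hl => (List.mem_filter.mp hl).2)
      (fun l hl => by simpa using (List.mem_filter.mp hl).2) hsum
    obtain ⟨d1, -, hd1⟩ := hmemd _ (List.mem_of_mem_filter hiT)
    obtain ⟨d2, -, hd2⟩ := hmemd _ (List.mem_of_mem_filter hjF)
    exact ⟨i, j, x_of_lbl d1 hd1, y_of_lbl d2 hd2⟩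
  · rintro ⟨i, j, hx, hy⟩
    refine ⟨cA1, SimpleGraph.Walk.cons (adj_cA1 i)
      (SimpleGraph.Walk.cons (adj_of_x hx)
      (SimpleGraph.Walk.cons (adj_cA2 j).symm
      (SimpleGraph.Walk.cons adj_c22
      (SimpleGraph.Walk.cons (adj_cB2 j)
      (SimpleGraph.Walk.cons (adj_of_y hy).symm
      (SimpleGraph.Walk.cons (adj_cB1 i).symm
      (SimpleGraph.Walk.cons (adj_c11 (k := k) (x := x) (y := y)).symm
      SimpleGraph.Walk.nil))))))), ?_, ?_, ?_⟩
    · refine ⟨⟨⟨?_⟩, by simp⟩, ?_⟩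
      · simp [Sym2.eq_iff]
      · simp
    · rfl
    · simp only [walkWeight, SimpleGraph.Walk.darts_cons, SimpleGraph.Walk.darts_nil,
        List.map_cons, List.map_nil, List.sum_cons, List.sum_nil, wt]
      have hm : k * i.val + j.val < k ^ 2 := m_lt i j
      have hP : k ^ 2 ≤ k ^ 3 := Nat.pow_le_pow_right (by omega) (by omega)
      generalize hg3 : k ^ 3 = P3 at *
      generalize hg2 : k ^ 2 = P2 at *
      omega

end WeightedCycle
end

section
/- Assume C_B is nonempty. Then for every vertex u ∈ V_A ∪ C_B and every vertex v ∈ V_B ∖ C_B, the weighted distance in G satisfies wdist_G(u, v) = min over x ∈ C_B of ( wdist_{G_A′}(u, x) + wdist_{G_B}(x, v) ). -/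
/-!
After its last vertex in `V_A`, a shortest `u`–`v` path in `G` enters `V_B` at some `x ∈ C_B`
(or starts there) and stays in `G_B`. Before that, each maximal excursion into `V_B` runs
between two cut vertices and can be replaced by the virtual edge joining them, whose weight is
a `G_B`-distance and hence no larger; this gives `≥`. Conversely each virtual edge is realised
by a shortest path in `G_B`, so a walk in `G_A′` followed by a walk in `G_B` becomes a walk in
`G` of no greater weight.
-/

namespace APSPAliceBob

open Classical

variable {V : Type*}

/-- The total weight of a walk: the sum of the weights of its edges. -/
def walkWeight {G : SimpleGraph V} (w : V → V → ℕ) {u v : V} (p : G.Walk u v) : ℕ :=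
  (p.darts.map (fun d => w d.toProd.1 d.toProd.2)).sum

/-- The weighted distance between `u` and `v` in `G`: the minimum total edge weight
of a path in `G` between `u` and `v`. -/
noncomputable def wdist (G : SimpleGraph V) (w : V → V → ℕ) (u v : V) : ℕ :=
  sInf {n : ℕ | ∃ p : G.Walk u v, p.IsPath ∧ walkWeight w p = n}

/-- The subgraph of `G` induced on a set `S` of vertices (kept as a graph on the
same vertex type: vertices outside `S` are isolated). -/
def inducedOn (G : SimpleGraph V) (S : Set V) : SimpleGraph V where
  Adj u v := G.Adj u v ∧ u ∈ S ∧ v ∈ S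
  symm := ⟨fun u v ⟨h, hu, hv⟩ => ⟨h.symm, hv, hu⟩⟩
  loopless := ⟨fun u ⟨h, _, _⟩ => h.ne rfl⟩

/-- `C_B`: the endpoints on the `V_B`-side of the cut edges `E(V_A, V_B)`. -/
def cutB (G : SimpleGraph V) (VA VB : Set V) : Set V :=
  {v : V | v ∈ VB ∧ ∃ u ∈ VA, G.Adj u v}

/-- The virtual graph `G_A′`: its vertices are `V_A ∪ C_B` (all other vertices are
isolated) and its edges are the edges of `G` inside `V_A`, the cut edges
`E(V_A, V_B)`, and all pairs of distinct nodes of `C_B`. -/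
def GA' (G : SimpleGraph V) (VA VB : Set V) : SimpleGraph V :=
  SimpleGraph.fromEdgeSet
    {e : Sym2 V | ∃ u v : V, e = s(u, v) ∧
      ((G.Adj u v ∧ u ∈ VA ∧ v ∈ VA) ∨
       (G.Adj u v ∧ u ∈ VA ∧ v ∈ VB) ∨
       (u ∈ cutB G VA VB ∧ v ∈ cutB G VA VB))}

/-- The weight function of `G_A′`: it agrees with `w` on the edges of `E_A ∪ C`, and
assigns to each pair of distinct nodes of `C_B` their weighted distance in `G_B`. -/
noncomputable def wA' (G : SimpleGraph V) (VA VB : Set V) (w : V → V → ℕ) :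
    V → V → ℕ := fun u v =>
  if u ∈ cutB G VA VB ∧ v ∈ cutB G VA VB then
    wdist (inducedOn G VB) w u v
  else w u v

open SimpleGraph

section WalkWeight

variable {G H : SimpleGraph V} {w : V → V → ℕ} {a b c : V}

@[simp]
lemma walkWeight_nil : walkWeight w (Walk.nil : G.Walk a a) = 0 := rfl

@[simp]
lemma walkWeight_cons (h : G.Adj a b) (p : G.Walk b c) :
    walkWeight w (Walk.cons h p) = w a b + walkWeight w p := by
  simp [walkWeight]

@[simp]
lemma walkWeight_append (p : G.Walk a b) (q : G.Walk b c) :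
    walkWeight w (p.append q) = walkWeight w p + walkWeight w q := by
  simp [walkWeight, Walk.darts_append]

@[simp]
lemma walkWeight_mapLe (hGH : G ≤ H) (p : G.Walk a b) :
    walkWeight w (p.mapLe hGH) = walkWeight w p := by
  simp [walkWeight, Walk.mapLe, Walk.darts_map, Function.comp_def]

lemma walkWeight_bypass_le (p : G.Walk a b) : walkWeight w p.bypass ≤ walkWeight w p :=
  ((p.darts_bypass_sublist_darts).map _).sum_le_sum fun _ _ => Nat.zero_le _

lemma wdist_le_walkWeight (p : G.Walk a b) : wdist G w a b ≤ walkWeight w p :=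
  calc wdist G w a b ≤ walkWeight w p.bypass := Nat.sInf_le ⟨p.bypass, p.bypass_isPath, rfl⟩
    _ ≤ walkWeight w p := walkWeight_bypass_le p

lemma exists_walkWeight_eq_wdist (h : G.Reachable a b) :
    ∃ p : G.Walk a b, walkWeight w p = wdist G w a b :=
  let ⟨p0⟩ := h
  let ⟨p, _, hp⟩ := Nat.sInf_mem (⟨_, p0.bypass, p0.bypass_isPath, rfl⟩ :
    {n : ℕ | ∃ p : G.Walk a b, p.IsPath ∧ walkWeight w p = n}.Nonempty)
  ⟨p, hp⟩

end WalkWeight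

lemma inducedOn_le (G : SimpleGraph V) (S : Set V) : inducedOn G S ≤ G :=
  fun _ _ h => h.1

section VirtualGraph

variable {G : SimpleGraph V} {VA VB : Set V} {w : V → V → ℕ} {a b v x z : V}

lemma wA'_of_mem (h : a ∈ cutB G VA VB ∧ b ∈ cutB G VA VB) :
    wA' G VA VB w a b = wdist (inducedOn G VB) w a b :=
  if_pos h

lemma wA'_of_not_mem (h : ¬(a ∈ cutB G VA VB ∧ b ∈ cutB G VA VB)) :
    wA' G VA VB w a b = w a b :=
  if_neg h

lemma GA'_adj_of_mem_cutB (ha : a ∈ cutB G VA VB) (hb : b ∈ cutB G VA VB) (hne : a ≠ b) :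
    (GA' G VA VB).Adj a b := by
  rw [GA', fromEdgeSet_adj]
  exact ⟨⟨a, b, rfl, Or.inr (Or.inr ⟨ha, hb⟩)⟩, hne⟩

lemma GA'_adj_of_adj (hunion : VA ∪ VB = Set.univ) (h : G.Adj a b) (ha : a ∈ VA) :
    (GA' G VA VB).Adj a b := by
  have hb : b ∈ VA ∪ VB := hunion ▸ Set.mem_univ b
  rw [GA', fromEdgeSet_adj]
  refine ⟨⟨a, b, rfl, ?_⟩, h.ne⟩
  rcases hb with hb | hb
  · exact Or.inl ⟨h, ha, hb⟩
  · exact Or.inr (Or.inl ⟨h, ha, hb⟩)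

lemma GA'_adj_cases (h : (GA' G VA VB).Adj a b) :
    G.Adj a b ∨ (a ∈ cutB G VA VB ∧ b ∈ cutB G VA VB) := by
  rw [GA', fromEdgeSet_adj] at h
  obtain ⟨⟨c, d, hcd, hc⟩, -⟩ := h
  rcases Sym2.eq_iff.mp hcd with ⟨rfl, rfl⟩ | ⟨rfl, rfl⟩
  · rcases hc with ⟨h, -⟩ | ⟨h, -⟩ | h
    · exact Or.inl h
    · exact Or.inl h
    · exact Or.inr h
  · rcases hc with ⟨h, -⟩ | ⟨h, -⟩ | h
    · exact Or.inl h.symm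
    · exact Or.inl h.symm
    · exact Or.inr h.symm

lemma exists_walk_walkWeight_le_of_GA'_walk
    (hGBconn : ∀ u ∈ VB, ∀ v ∈ VB, (inducedOn G VB).Reachable u v)
    (p : (GA' G VA VB).Walk a b) :
    ∃ q : G.Walk a b, walkWeight w q ≤ walkWeight (wA' G VA VB w) p := by
  induction p with
  | nil => exact ⟨.nil, le_rfl⟩
  | @cons a c b h p ih =>
    obtain ⟨q, hq⟩ := ih
    by_cases hcut : a ∈ cutB G VA VB ∧ c ∈ cutB G VA VB
    · obtain ⟨r, hr⟩ :=
        exists_walkWeight_eq_wdist (w := w) (hGBconn a hcut.1.1 c hcut.2.1)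
      refine ⟨(r.mapLe (inducedOn_le G VB)).append q, ?_⟩
      simp only [walkWeight_append, walkWeight_mapLe, walkWeight_cons, hr, wA'_of_mem hcut]
      omega
    · refine ⟨.cons ((GA'_adj_cases h).resolve_right hcut) q, ?_⟩
      simp only [walkWeight_cons, wA'_of_not_mem hcut]
      omega

variable (G VA VB w)

def ReachesViaCut (a v : V) (n : ℕ) : Prop :=
  ∃ x ∈ cutB G VA VB, ∃ (p : (GA' G VA VB).Walk a x) (q : (inducedOn G VB).Walk x v),
    walkWeight (wA' G VA VB w) p + walkWeight w q ≤ n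

def ReachesFromB (a v : V) (n : ℕ) : Prop :=
  (∃ q : (inducedOn G VB).Walk a v, walkWeight w q ≤ n) ∨
    ∃ z ∈ cutB G VA VB, ∃ (q : (inducedOn G VB).Walk a z) (m : ℕ),
      walkWeight w q + m ≤ n ∧ ReachesViaCut G VA VB w z v m

variable {G VA VB w}

lemma ReachesViaCut.mono {m n : ℕ} (h : ReachesViaCut G VA VB w a v m) (hmn : m ≤ n) :
    ReachesViaCut G VA VB w a v n :=
  let ⟨x, hx, p, q, hle⟩ := h
  ⟨x, hx, p, q, hle.trans hmn⟩

lemma ReachesViaCut.cons {n : ℕ} (hab : (GA' G VA VB).Adj a b)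
    (h : ReachesViaCut G VA VB w b v n) :
    ReachesViaCut G VA VB w a v (wA' G VA VB w a b + n) :=
  let ⟨x, hx, p, q, hle⟩ := h
  ⟨x, hx, .cons hab p, q, by rw [walkWeight_cons]; omega⟩

lemma ReachesViaCut.of_walk_inducedOn {m : ℕ} (ha : a ∈ cutB G VA VB)
    (hz : z ∈ cutB G VA VB) (q : (inducedOn G VB).Walk a z)
    (h : ReachesViaCut G VA VB w z v m) :
    ReachesViaCut G VA VB w a v (walkWeight w q + m) := by
  by_cases haz : a = z
  · subst haz
    exact h.mono (Nat.le_add_left m _)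
  · refine (h.cons (GA'_adj_of_mem_cutB ha hz haz)).mono ?_
    rw [wA'_of_mem ⟨ha, hz⟩]
    exact Nat.add_le_add_right (wdist_le_walkWeight q) m

lemma ReachesFromB.cons {n : ℕ} (hab : (inducedOn G VB).Adj a b)
    (h : ReachesFromB G VA VB w b v n) : ReachesFromB G VA VB w a v (w a b + n) := by
  rcases h with ⟨q, hq⟩ | ⟨z, hz, q, m, hle, hz'⟩
  · exact Or.inl ⟨.cons hab q, by rw [walkWeight_cons]; omega⟩
  · exact Or.inr ⟨z, hz, .cons hab q, m, by rw [walkWeight_cons]; omega, hz'⟩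

lemma ReachesFromB.reachesViaCut {n : ℕ} (ha : a ∈ cutB G VA VB)
    (h : ReachesFromB G VA VB w a v n) : ReachesViaCut G VA VB w a v n := by
  rcases h with ⟨q, hq⟩ | ⟨z, hz, q, m, hle, hz'⟩
  · exact ⟨a, ha, .nil, q, by rwa [walkWeight_nil, zero_add]⟩
  · exact (hz'.of_walk_inducedOn ha hz q).mono hle

lemma reachesViaCut_and_reachesFromB_of_walk (hdisj : Disjoint VA VB)
    (hunion : VA ∪ VB = Set.univ) (hv : v ∈ VB) (p : G.Walk a v) :
    (a ∈ VA → ReachesViaCut G VA VB w a v (walkWeight w p)) ∧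
      (a ∈ VB → ReachesFromB G VA VB w a v (walkWeight w p)) := by
  induction p with
  | nil =>
    exact ⟨fun ha => absurd hv (Set.disjoint_left.mp hdisj ha),
      fun _ => Or.inl ⟨.nil, le_rfl⟩⟩
  | @cons a b v h q ih =>
    obtain ⟨ihA, ihB⟩ := ih hv
    have hb : b ∈ VA ∪ VB := hunion ▸ Set.mem_univ b
    rw [walkWeight_cons]
    refine ⟨fun ha => ?_, fun ha => ?_⟩
    · have ha' : a ∉ cutB G VA VB := fun hc => Set.disjoint_left.mp hdisj ha hc.1
      have hq : ReachesViaCut G VA VB w b v (walkWeight w q) :=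
        hb.elim ihA fun hbB => (ihB hbB).reachesViaCut ⟨hbB, a, ha, h⟩
      simpa only [wA'_of_not_mem (fun hc => ha' hc.1)] using
        hq.cons (GA'_adj_of_adj hunion h ha)
    · rcases hb with hbA | hbB
      · have hb' : b ∉ cutB G VA VB := fun hc => Set.disjoint_left.mp hdisj hbA hc.1
        have hab : (GA' G VA VB).Adj a b := (GA'_adj_of_adj hunion h.symm hbA).symm
        refine Or.inr ⟨a, ⟨ha, b, hbA, h.symm⟩, .nil, _, by rw [walkWeight_nil, zero_add], ?_⟩
        simpa only [wA'_of_not_mem (fun hc => hb' hc.2)] using (ihA hbA).cons hab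
      · exact (ihB hbB).cons ⟨h, ha, hbB⟩

lemma reachesViaCut_of_walk (hdisj : Disjoint VA VB) (hunion : VA ∪ VB = Set.univ)
    (ha : a ∈ VA ∪ cutB G VA VB) (hv : v ∈ VB) (p : G.Walk a v) :
    ReachesViaCut G VA VB w a v (walkWeight w p) := by
  have h := reachesViaCut_and_reachesFromB_of_walk (w := w) hdisj hunion hv p
  exact ha.elim h.1 fun hc => (h.2 hc.1).reachesViaCut hc

lemma GA'_reachable_of_mem_cutB (hdisj : Disjoint VA VB) (hunion : VA ∪ VB = Set.univ)
    (hconn : G.Preconnected) (ha : a ∈ VA ∪ cutB G VA VB) (hx : x ∈ cutB G VA VB) :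
    (GA' G VA VB).Reachable a x := by
  obtain ⟨p⟩ := hconn a x
  obtain ⟨y, hy, p1, -, -⟩ := reachesViaCut_of_walk (w := fun _ _ => 0) hdisj hunion ha hx.1 p
  by_cases hyx : y = x
  · exact hyx ▸ p1.reachable
  · exact p1.reachable.trans (GA'_adj_of_mem_cutB hy hx hyx).reachable

end VirtualGraph

theorem wdist_eq_min_through_cut_general (G : SimpleGraph V) (hconn : G.Connected)
    (w : V → V → ℕ)
    (VA VB : Set V) (hdisj : Disjoint VA VB) (hunion : VA ∪ VB = Set.univ)
    (hGBconn : ∀ u ∈ VB, ∀ v ∈ VB, (inducedOn G VB).Reachable u v)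
    (hCB : (cutB G VA VB).Nonempty) :
    ∀ u ∈ VA ∪ cutB G VA VB, ∀ v ∈ VB \ cutB G VA VB,
      wdist G w u v =
        sInf ((fun x => wdist (GA' G VA VB) (wA' G VA VB w) u x +
                        wdist (inducedOn G VB) w x v) '' cutB G VA VB) := by
  intro u hu v hv
  apply le_antisymm
  · obtain ⟨x, hx, hmin⟩ := Nat.sInf_mem (hCB.image fun x =>
      wdist (GA' G VA VB) (wA' G VA VB w) u x + wdist (inducedOn G VB) w x v)
    obtain ⟨p, hp⟩ := exists_walkWeight_eq_wdist (w := wA' G VA VB w)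
      (GA'_reachable_of_mem_cutB hdisj hunion hconn.preconnected hu hx)
    obtain ⟨p', hp'⟩ := exists_walk_walkWeight_le_of_GA'_walk (w := w) hGBconn p
    obtain ⟨q, hq⟩ := exists_walkWeight_eq_wdist (w := w) (hGBconn x hx.1 v hv.1)
    calc wdist G w u v ≤ walkWeight w (p'.append (q.mapLe (inducedOn_le G VB))) :=
          wdist_le_walkWeight _
      _ ≤ walkWeight (wA' G VA VB w) p + walkWeight w q := by
          rw [walkWeight_append, walkWeight_mapLe]; omega
      _ = _ := by rw [hp, hq]; exact hmin
  · obtain ⟨p, hp⟩ := exists_walkWeight_eq_wdist (w := w) (hconn.preconnected u v)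
    obtain ⟨x, hx, p1, p2, hle⟩ := reachesViaCut_of_walk (w := w) hdisj hunion hu hv.1 p
    refine le_trans (Nat.sInf_le ⟨x, hx, rfl⟩) ?_
    calc wdist (GA' G VA VB) (wA' G VA VB w) u x + wdist (inducedOn G VB) w x v
      _ ≤ walkWeight (wA' G VA VB w) p1 + walkWeight w p2 :=
          add_le_add (wdist_le_walkWeight p1) (wdist_le_walkWeight p2)
      _ ≤ wdist G w u v := hp ▸ hle

/-- Assume `C_B ≠ ∅`. For every `u ∈ V_A ∪ C_B` and every `v ∈ V_B ∖ C_B`,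
`wdist_G(u, v) = min_{x ∈ C_B} ( wdist_{G_A′}(u, x) + wdist_{G_B}(x, v) )`. -/
theorem wdist_eq_min_through_cut [Fintype V] (G : SimpleGraph V) (hconn : G.Connected)
    (w : V → V → ℕ) (hsymm : ∀ u v : V, w u v = w v u)
    (hpos : ∀ u v : V, G.Adj u v → 0 < w u v)
    (VA VB : Set V) (hdisj : Disjoint VA VB) (hunion : VA ∪ VB = Set.univ)
    (hGBconn : ∀ u ∈ VB, ∀ v ∈ VB, (inducedOn G VB).Reachable u v)
    (hCB : (cutB G VA VB).Nonempty) :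
    ∀ u ∈ VA ∪ cutB G VA VB, ∀ v ∈ VB \ cutB G VA VB,
      wdist G w u v =
        sInf ((fun x => wdist (GA' G VA VB) (wA' G VA VB w) u x +
                        wdist (inducedOn G VB) w x v) '' cutB G VA VB) :=
  wdist_eq_min_through_cut_general G hconn w VA VB hdisj hunion hGBconn hCB

end APSPAliceBob
end
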